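/- arXiv:2203.03702 — 8 statements merged into one kernel-verified Lean document; each statement's English description precedes it below -/
import Mathlib

section
/- Let the pair (A,B) be controllable, i.e., the controllability matrix [B, AB, …, A^{n−1}B] has rank n. Let {u_k}_{k=0}^{M−1} ⊂ ℝ^m be a sequence whose Hankel matrix of depth L+n has full row rank, i.e., rank(H_{L+n}(u)) = (L+n)m, and let {x_k}_{k=0}^{M−1} ⊂ ℝ^n satisfy x_{k+1} = A x_k + B u_k for k = 0,…,M−2. Then the stacked matrix consisting of H_L(u) on top of the row of states [x_0, x_1, …, x_{M−L}] has full row rank Lm + n. -/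
/-- Controllability matrix `[B, AB, …, A^{n-1}B]` of the pair `(A,B)`. -/
def ctrbMat {n m : ℕ} (A : Matrix (Fin n) (Fin n) ℝ) (B : Matrix (Fin n) (Fin m) ℝ) :
    Matrix (Fin n) (Fin n × Fin m) ℝ :=
  Matrix.of fun i p => (A ^ (p.1 : ℕ) * B) i p.2

/-- Hankel matrix of depth `L` of a sequence `z_0, …, z_{M-1}` in `ℝ^σ`:
the `σL × (M-L+1)` matrix whose `(i,j)` block is `z_{i+j}`. -/
def dHankel {σ : ℕ} (L M : ℕ) (z : ℕ → Fin σ → ℝ) :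
    Matrix (Fin L × Fin σ) (Fin (M - L + 1)) ℝ :=
  Matrix.of fun p j => z ((p.1 : ℕ) + (j : ℕ)) p.2

open Matrix

lemma aux_vecMul_eq_zero {ρ κ : Type*} [Fintype ρ] [Fintype κ] (K : Matrix ρ κ ℝ)
    (h : K.rank = Fintype.card ρ) : ∀ v : ρ → ℝ, v ᵥ* K = 0 → v = 0 := by
  have hli : LinearIndependent ℝ (fun i => K i) := by
    rw [linearIndependent_iff_card_eq_finrank_span, ← h, K.rank_eq_finrank_span_row]
    rfl
  intro v hv
  change LinearIndependent ℝ K.row at hli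
  rw [← Matrix.vecMul_injective_iff] at hli
  have := hli (a₁ := v) (a₂ := 0) ?_
  · exact this
  · simp [hv]

lemma aux_rank_of_vecMul {ρ κ : Type*} [Fintype ρ] [Fintype κ] (K : Matrix ρ κ ℝ)
    (h : ∀ v : ρ → ℝ, v ᵥ* K = 0 → v = 0) : K.rank = Fintype.card ρ := by
  have hli : LinearIndependent ℝ (fun i => K i) := by
    change LinearIndependent ℝ K.row
    rw [← Matrix.vecMul_injective_iff]
    intro a b hab
    have hz : (a - b) ᵥ* K = 0 := by
      simp only [Matrix.sub_vecMul]; simpa using congrArg (· - b ᵥ* K) hab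
    exact sub_eq_zero.mp (h _ hz)
  exact hli.rank_matrix

lemma aux_mulVec_sum {n n' : ℕ} {ι : Type*} (S : Finset ι)
    (A : Matrix (Fin n) (Fin n') ℝ) (f : ι → Fin n' → ℝ) :
    A *ᵥ (∑ s ∈ S, f s) = ∑ s ∈ S, A *ᵥ f s := by
  classical
  induction S using Finset.induction with
  | empty => simp
  | insert _ _ hnotmem ih =>
      rw [Finset.sum_insert hnotmem, Finset.sum_insert hnotmem, Matrix.mulVec_add, ih]

lemma aux_dot_sum_mulVec {n n' : ℕ} {ι : Type*} (S : Finset ι)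
    (f : ι → Matrix (Fin n) (Fin n') ℝ) (ξ : Fin n → ℝ) (y : Fin n' → ℝ) :
    ξ ⬝ᵥ ((∑ s ∈ S, f s) *ᵥ y) = ∑ s ∈ S, ξ ⬝ᵥ (f s *ᵥ y) := by
  classical
  induction S using Finset.induction with
  | empty => simp
  | insert _ _ hnotmem ih =>
      rw [Finset.sum_insert hnotmem, Finset.sum_insert hnotmem, Matrix.add_mulVec,
        dotProduct_add, ih]

lemma aux_dot_sum {n : ℕ} {ι : Type*} (S : Finset ι)
    (ξ : Fin n → ℝ) (f : ι → Fin n → ℝ) :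
    ξ ⬝ᵥ (∑ s ∈ S, f s) = ∑ s ∈ S, ξ ⬝ᵥ f s := by
  classical
  induction S using Finset.induction with
  | empty => simp
  | insert _ _ hnotmem ih =>
      rw [Finset.sum_insert hnotmem, Finset.sum_insert hnotmem, dotProduct_add, ih]

lemma aux_sum_dot {n : ℕ} {ι : Type*} (S : Finset ι)
    (f : ι → Fin n → ℝ) (z : Fin n → ℝ) :
    (∑ s ∈ S, f s) ⬝ᵥ z = ∑ s ∈ S, f s ⬝ᵥ z := by
  classical
  induction S using Finset.induction with
  | empty => simp
  | insert _ _ hnotmem ih =>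
      rw [Finset.sum_insert hnotmem, Finset.sum_insert hnotmem, add_dotProduct, ih]

/-- **Willems' fundamental lemma, rank statement (discrete time).**
If `(A,B)` is controllable and the input Hankel matrix of depth `L+n` has full row
rank `(L+n)m`, then the matrix consisting of `H_L(u)` stacked on top of the row of
states `[x_0, …, x_{M-L}]` has full row rank `Lm + n`. -/
theorem stmt0 {n m M L : ℕ} (hL : 1 ≤ L) (hM : L + n ≤ M)
    (A : Matrix (Fin n) (Fin n) ℝ) (B : Matrix (Fin n) (Fin m) ℝ)
    (hctrb : (ctrbMat A B).rank = n)
    (u : ℕ → Fin m → ℝ) (x : ℕ → Fin n → ℝ)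
    (hx : ∀ k : ℕ, k + 1 < M → x (k + 1) = A.mulVec (x k) + B.mulVec (u k))
    (hpe : (dHankel (L + n) M u).rank = (L + n) * m) :
    (Matrix.fromRows (dHankel L M u)
      (Matrix.of fun (i : Fin n) (j : Fin (M - L + 1)) => x (j : ℕ) i)).rank = L * m + n := by
  classical
  have hcard : L * m + n = Fintype.card ((Fin L × Fin m) ⊕ Fin n) := by simp
  rw [hcard]
  apply aux_rank_of_vecMul
  intro v hv
  -- characteristic polynomial coefficients
  set c : ℕ → ℝ := fun s => A.charpoly.coeff s with hc
  have hd : A.charpoly.natDegree = n := by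
    simp [Matrix.charpoly_natDegree_eq_dim]
  have hcn : c n = 1 := by
    have hm := Matrix.charpoly_monic A
    simpa [hc, hd] using hm.coeff_natDegree
  have hCH : ∑ s ∈ Finset.range (n + 1), c s • A ^ s = 0 := by
    have h0 := Matrix.aeval_self_charpoly A
    rw [Polynomial.aeval_eq_sum_range, hd] at h0
    exact h0
  -- the two pieces of the annihilating vector
  set η : ℕ → Fin m → ℝ :=
    fun i a => if h : i < L then v (Sum.inl (⟨i, h⟩, a)) else 0 with hη
  set ξ : Fin n → ℝ := fun b => v (Sum.inr b) with hξ
  set w : ℕ → Fin m → ℝ := fun p => ξ ᵥ* (A ^ p * B) with hw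
  have hη0 : ∀ i, L ≤ i → η i = 0 := by
    intro i hi; funext a; simp [hη, Nat.not_lt.mpr hi]
  -- the basic constraint from `v ᵥ* S = 0`
  have key : ∀ j : ℕ, j + L ≤ M →
      (∑ i ∈ Finset.range L, η i ⬝ᵥ u (i + j)) + ξ ⬝ᵥ x j = 0 := by
    intro j hj
    have hjlt : j < M - L + 1 := by omega
    have h0 := congrFun hv (⟨j, hjlt⟩ : Fin (M - L + 1))
    simp only [Matrix.vecMul, dotProduct, Fintype.sum_sum_type,
      Fintype.sum_prod_type, Matrix.fromRows_apply_inl, Matrix.fromRows_apply_inr, Matrix.of_apply, Sum.elim_inl, Sum.elim_inr,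
      dHankel, Pi.zero_apply] at h0
    rw [← h0]
    congr 1
    · rw [← Fin.sum_univ_eq_sum_range (fun i => η i ⬝ᵥ u (i + j)) L]
      refine Finset.sum_congr rfl fun i _ => ?_
      simp [dotProduct, hη, i.isLt]
  -- explicit solution of the recursion
  have hxs : ∀ s j : ℕ, s + j < M →
      x (s + j) = (A ^ s) *ᵥ (x j) +
        ∑ r ∈ Finset.range s, ((A ^ r) * B) *ᵥ (u (s - 1 - r + j)) := by
    intro s
    induction s with
    | zero => intro j _; simp
    | succ s ih =>
        intro j hj
        have h1 : s + j + 1 < M := by omega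
        have h2 : s + 1 + j = (s + j) + 1 := by omega
        rw [h2, hx _ h1, ih j (by omega), Matrix.mulVec_add, Matrix.mulVec_mulVec,
          ← pow_succ', aux_mulVec_sum, Finset.sum_range_succ']
        simp only [pow_zero, Matrix.one_mul, Nat.sub_zero, Nat.add_sub_cancel]
        rw [add_assoc]
        congr 2
        refine Finset.sum_congr rfl fun r hr => ?_
        have hidx : s - (r + 1) = s - 1 - r := by omega
        rw [Matrix.mulVec_mulVec, ← Matrix.mul_assoc, ← pow_succ', hidx]
  -- Cayley–Hamilton, scalar consequence
  have hCHdot : ∀ y : Fin n → ℝ,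
      ∑ s ∈ Finset.range (n + 1), c s * ((ξ ᵥ* A ^ s) ⬝ᵥ y) = 0 := by
    intro y
    have h0 : ξ ⬝ᵥ ((∑ s ∈ Finset.range (n + 1), c s • A ^ s) *ᵥ y) = 0 := by
      rw [hCH]; simp
    rw [aux_dot_sum_mulVec] at h0
    rw [← h0]
    refine Finset.sum_congr rfl fun s _ => ?_
    rw [Matrix.smul_mulVec, dotProduct_smul, smul_eq_mul,
      Matrix.dotProduct_mulVec]
  -- the combined coefficient vector
  set θ : ℕ → Fin m → ℝ := fun t =>
    (∑ s ∈ Finset.range (n + 1), if s ≤ t then c s • η (t - s) else 0) +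
    (∑ s ∈ Finset.range (n + 1), if t < s then c s • w (s - 1 - t) else 0) with hθdef
  -- θ annihilates the deep Hankel matrix
  have hθH : ∀ j : ℕ, j + (L + n) ≤ M →
      ∑ t ∈ Finset.range (L + n), θ t ⬝ᵥ u (t + j) = 0 := by
    intro j hj
    have step1 : ∑ t ∈ Finset.range (L + n), θ t ⬝ᵥ u (t + j)
        = ∑ s ∈ Finset.range (n + 1),
            ((∑ t ∈ Finset.range (L + n),
              if s ≤ t then c s * (η (t - s) ⬝ᵥ u (t + j)) else 0) +
             (∑ t ∈ Finset.range (L + n),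
              if t < s then c s * (w (s - 1 - t) ⬝ᵥ u (t + j)) else 0)) := by
      have e : ∀ t, θ t ⬝ᵥ u (t + j)
          = ∑ s ∈ Finset.range (n + 1),
              ((if s ≤ t then c s * (η (t - s) ⬝ᵥ u (t + j)) else 0) +
               (if t < s then c s * (w (s - 1 - t) ⬝ᵥ u (t + j)) else 0)) := by
        intro t
        rw [hθdef]
        rw [add_dotProduct, aux_sum_dot, aux_sum_dot, ← Finset.sum_add_distrib]
        refine Finset.sum_congr rfl fun s _ => ?_
        congr 1
        · split <;> simp [smul_dotProduct]
        · split <;> simp [smul_dotProduct]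
      rw [Finset.sum_congr rfl (fun t _ => e t), Finset.sum_comm]
      refine Finset.sum_congr rfl fun s _ => ?_
      rw [Finset.sum_add_distrib]
    rw [step1]
    have part1 : ∀ s ∈ Finset.range (n + 1),
        (∑ t ∈ Finset.range (L + n), if s ≤ t then c s * (η (t - s) ⬝ᵥ u (t + j)) else 0)
          = c s * (∑ i ∈ Finset.range L, η i ⬝ᵥ u (i + (s + j))) := by
      intro s hs
      have hsn : s ≤ n := by exact Nat.lt_succ_iff.mp (Finset.mem_range.mp hs)
      have e1 : (∑ t ∈ Finset.range (L + n),
          if s ≤ t then c s * (η (t - s) ⬝ᵥ u (t + j)) else 0)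
          = ∑ t ∈ Finset.Ico s (L + n), c s * (η (t - s) ⬝ᵥ u (t + j)) := by
        rw [← Finset.sum_filter]
        apply Finset.sum_congr _ (fun _ _ => rfl)
        ext t
        simp only [Finset.mem_filter, Finset.mem_range, Finset.mem_Ico]
        omega
      rw [e1, Finset.sum_Ico_eq_sum_range]
      have e2 : ∀ i ∈ Finset.range (L + n - s),
          c s * (η (s + i - s) ⬝ᵥ u (s + i + j)) = c s * (η i ⬝ᵥ u (i + (s + j))) := by
        intro i _
        have h1 : s + i - s = i := by omega
        have h2 : s + i + j = i + (s + j) := by omega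
        rw [h1, h2]
      rw [Finset.sum_congr rfl e2, ← Finset.mul_sum]
      congr 1
      symm
      apply Finset.sum_subset (Finset.range_subset_range.mpr (show L ≤ L + n - s by omega))
      intro t _ ht
      rw [hη0 t (by simpa using Finset.mem_range.not.mp ht)]
      simp
    have part2 : ∀ s ∈ Finset.range (n + 1),
        (∑ t ∈ Finset.range (L + n), if t < s then c s * (w (s - 1 - t) ⬝ᵥ u (t + j)) else 0)
          = c s * (∑ t ∈ Finset.range s, w (s - 1 - t) ⬝ᵥ u (t + j)) := by
      intro s hs
      have hsn : s ≤ n := Nat.lt_succ_iff.mp (Finset.mem_range.mp hs)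
      rw [Finset.mul_sum]
      symm
      rw [Finset.sum_congr rfl
        (fun t (ht : t ∈ Finset.range s) =>
          (if_pos (Finset.mem_range.mp ht) :
            (if t < s then c s * (w (s - 1 - t) ⬝ᵥ u (t + j)) else 0)
              = c s * (w (s - 1 - t) ⬝ᵥ u (t + j))).symm)]
      apply Finset.sum_subset (Finset.range_subset_range.mpr (show s ≤ L + n by omega))
      intro t _ ht
      rw [if_neg (Finset.mem_range.not.mp ht)]
    rw [Finset.sum_congr rfl (fun s hs => by rw [part1 s hs, part2 s hs])]
    -- use the dynamics and the basic constraint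
    have part3 : ∀ s ∈ Finset.range (n + 1),
        c s * (∑ i ∈ Finset.range L, η i ⬝ᵥ u (i + (s + j)))
          + c s * (∑ t ∈ Finset.range s, w (s - 1 - t) ⬝ᵥ u (t + j))
          = -(c s * ((ξ ᵥ* A ^ s) ⬝ᵥ x j)) := by
      intro s hs
      have hsn : s ≤ n := Nat.lt_succ_iff.mp (Finset.mem_range.mp hs)
      have hkey := key (s + j) (by omega)
      have hxsj := hxs s j (by omega)
      have hdot : ξ ⬝ᵥ x (s + j)
          = (ξ ᵥ* A ^ s) ⬝ᵥ x j + ∑ t ∈ Finset.range s, w (s - 1 - t) ⬝ᵥ u (t + j) := by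
        rw [hxsj, dotProduct_add, aux_dot_sum, Matrix.dotProduct_mulVec]
        congr 1
        have e3 : ∀ r ∈ Finset.range s,
            ξ ⬝ᵥ ((A ^ r * B) *ᵥ u (s - 1 - r + j)) = w r ⬝ᵥ u (s - 1 - r + j) := by
          intro r _
          rw [Matrix.dotProduct_mulVec, hw]
        rw [Finset.sum_congr rfl e3]
        rw [← Finset.sum_range_reflect (fun t => w (s - 1 - t) ⬝ᵥ u (t + j)) s]
        refine Finset.sum_congr rfl fun r hr => ?_
        have hrs := Finset.mem_range.mp hr
        have hrr : s - 1 - (s - 1 - r) = r := by omega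
        rw [hrr]
      have hsum : ∑ i ∈ Finset.range L, η i ⬝ᵥ u (i + (s + j)) = - (ξ ⬝ᵥ x (s + j)) := by
        linarith [hkey]
      rw [hsum, hdot]
      ring
    rw [Finset.sum_congr rfl part3, Finset.sum_neg_distrib, hCHdot (x j), neg_zero]
  -- θ vanishes by persistency of excitation
  have hΘ : ∀ t, t < L + n → θ t = 0 := by
    set Θ : Fin (L + n) × Fin m → ℝ := fun p => θ (p.1 : ℕ) p.2 with hΘd
    have h0 : Θ ᵥ* dHankel (L + n) M u = 0 := by
      funext jf
      have hj := hθH (jf : ℕ) (by have := jf.isLt; omega)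
      rw [← Fin.sum_univ_eq_sum_range (fun t => θ t ⬝ᵥ u (t + (jf : ℕ))) (L + n)] at hj
      simp only [Matrix.vecMul, dotProduct, Fintype.sum_prod_type, dHankel,
        Matrix.of_apply, Pi.zero_apply, hΘd]
      simpa [dotProduct] using hj
    have hall := aux_vecMul_eq_zero _ (by rw [hpe]; simp) Θ h0
    intro t ht
    funext a
    exact congrFun hall ((⟨t, ht⟩ : Fin (L + n)), a)
  -- the η part vanishes
  have hηall : ∀ d k, L ≤ k + d → η k = 0 := by
    intro d
    induction d with
    | zero => intro k hk; exact hη0 k (by omega)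
    | succ d ih =>
        intro k hk
        by_cases hkL : L ≤ k
        · exact hη0 k hkL
        · have ht := hΘ (k + n) (by omega)
          funext a
          have h1 := congrFun ht a
          rw [hθdef] at h1
          simp only [Pi.add_apply, Finset.sum_apply, ite_apply, Pi.smul_apply,
            Pi.zero_apply, smul_eq_mul] at h1
          have hz2 : ∑ s ∈ Finset.range (n + 1),
              (if k + n < s then c s * w (s - 1 - (k + n)) a else 0) = 0 := by
            apply Finset.sum_eq_zero
            intro s hs
            rw [if_neg (by have := Finset.mem_range.mp hs; omega)]
          have hz1 : ∑ s ∈ Finset.range (n + 1),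
              (if s ≤ k + n then c s * η (k + n - s) a else 0)
              = ∑ s ∈ Finset.range (n + 1), c s * η (k + n - s) a := by
            refine Finset.sum_congr rfl fun s hs => ?_
            rw [if_pos (by have := Finset.mem_range.mp hs; omega)]
          rw [hz1, hz2, add_zero, Finset.sum_range_succ] at h1
          have hz3 : ∑ s ∈ Finset.range n, c s * η (k + n - s) a = 0 := by
            apply Finset.sum_eq_zero
            intro s hs
            have hsn := Finset.mem_range.mp hs
            rw [ih (k + n - s) (by omega)]
            simp
          rw [hz3, zero_add] at h1
          have hkk : k + n - n = k := by omega
          rw [hkk, hcn, one_mul] at h1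
          simpa using h1
  have hηz : ∀ k, η k = 0 := fun k => hηall L k (by omega)
  -- the ξ part: the w's vanish
  have hwz : ∀ p, p < n → w p = 0 := by
    intro p
    induction p using Nat.strong_induction_on with
    | _ p ihp =>
      intro hp
      have ht := hΘ (n - 1 - p) (by omega)
      funext a
      have h1 := congrFun ht a
      rw [hθdef] at h1
      simp only [Pi.add_apply, Finset.sum_apply, ite_apply, Pi.smul_apply,
        Pi.zero_apply, smul_eq_mul] at h1
      have hz1 : ∑ s ∈ Finset.range (n + 1),
          (if s ≤ n - 1 - p then c s * η (n - 1 - p - s) a else 0) = 0 := by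
        apply Finset.sum_eq_zero
        intro s _
        rw [hηz (n - 1 - p - s)]
        simp
      rw [hz1, zero_add, Finset.sum_range_succ] at h1
      have hz2 : ∑ s ∈ Finset.range n,
          (if n - 1 - p < s then c s * w (s - 1 - (n - 1 - p)) a else 0) = 0 := by
        apply Finset.sum_eq_zero
        intro s hs
        have hsn := Finset.mem_range.mp hs
        by_cases hc : n - 1 - p < s
        · rw [if_pos hc, ihp (s - 1 - (n - 1 - p)) (by omega) (by omega)]
          simp
        · rw [if_neg hc]
      rw [hz2, zero_add, if_pos (by omega)] at h1
      have hidx : n - 1 - (n - 1 - p) = p := by omega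
      rw [hidx, hcn, one_mul] at h1
      exact h1
  -- controllability kills ξ
  have hξz : ξ = 0 := by
    apply aux_vecMul_eq_zero (ctrbMat A B) (by rw [hctrb]; simp) ξ
    funext p
    have hwp := congrFun (hwz (p.1 : ℕ) p.1.isLt) p.2
    rw [hw] at hwp
    simpa [Matrix.vecMul, dotProduct, ctrbMat] using hwp
  -- conclude
  funext p
  cases p with
  | inl q =>
      have := congrFun (hηz (q.1 : ℕ)) q.2
      simpa [hη, q.1.isLt] using this
  | inr b =>
      have := congrFun hξz b
      simpa [hξ] using this
end

section
/- Let the pair (A,B) be controllable, i.e., the controllability matrix [B, AB, …, A^{n−1}B] has rank n. Let {u_k}_{k=0}^{M−1} ⊂ ℝ^m satisfy rank(H_{L+n}(u)) = (L+n)m, let {x_k}_{k=0}^{M−1} satisfy x_{k+1} = A x_k + B u_k, and let y_k = C x_k + D u_k. Then a pair of sequences {ū_k}_{k=0}^{L−1} ⊂ ℝ^m, {ȳ_k}_{k=0}^{L−1} ⊂ ℝ^p is an input-output trajectory of the system x_{k+1} = A x_k + B u_k, y_k = C x_k + D u_k (i.e., there exists a state sequence {x̄_k}_{k=0}^{L−1}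 with x̄_{k+1} = A x̄_k + B ū_k and ȳ_k = C x̄_k + D ū_k) if and only if there exists a vector α ∈ ℝ^{M−L+1} such that H_L(u) α equals the stacked vector [ū_0; …; ū_{L−1}] and H_L(y) α equals the stacked vector [ȳ_0; …; ȳ_{L−1}]. -/
/-!
Windows of the data are trajectories, and so are their linear combinations; hence every `α`
yields the trajectory `(H_L(u) α, H_L(y) α)`. Conversely, a trajectory is determined by its
initial state and its input, so it suffices that the stacked matrix `[x_0 ⋯ x_{M-L}; H_L(u)]`
has full row rank. If `(ξ, η)` lies in its left kernel, substituting
`x_{j+k} = A^k x_j + ∑_{r<k} A^{k-1-r} B u_{j+r}` for `k = 0, …, n` and combining these rows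
with the coefficients of the characteristic polynomial `χ` of `A` (Cayley–Hamilton) produces a
left-kernel vector of `H_{L+n}(u)`, which therefore vanishes. Its entries are the coefficients
of `χ(z) η(z)` plus a polynomial of degree `< n` built from the `ξᵀ A^a B`: the top ones force
`η = 0`, the bottom ones then force `ξᵀ A^a B = 0` for `a < n`, so `ξ = 0` by controllability.
-/

open Matrix Finset

namespace Matrix

variable {K m n : Type*} [Field K] [Fintype m] [Fintype n] {A : Matrix m n K}

theorem vecMul_injective_of_rank_eq_card (h : A.rank = Fintype.card m) :
    Function.Injective A.vecMul := by
  rw [vecMul_injective_iff, linearIndependent_iff_card_eq_finrank_span, ← h,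
    rank_eq_finrank_span_row]
  rfl

theorem mulVec_surjective_of_vecMul_injective (h : Function.Injective A.vecMul) :
    Function.Surjective A.mulVec := by
  have hrank : A.rank = Module.finrank K (m → K) := by
    rw [(vecMul_injective_iff.mp h).rank_matrix, Module.finrank_fintype_fun_eq_card]
  intro w
  obtain ⟨v, hv⟩ := (Submodule.eq_top_of_finrank_eq hrank).ge (Submodule.mem_top (x := w))
  exact ⟨v, hv⟩

theorem sum_range_charpoly_coeff_smul_pow {R ι : Type*} [CommRing R] [Nontrivial R] [Fintype ι]
    [DecidableEq ι] (A : Matrix ι ι R) :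
    ∑ k ∈ range (Fintype.card ι + 1), A.charpoly.coeff k • A ^ k = 0 := by
  simpa [Polynomial.aeval_eq_sum_range] using A.aeval_self_charpoly

theorem charpoly_coeff_card {R ι : Type*} [CommRing R] [Nontrivial R] [Fintype ι]
    [DecidableEq ι] (A : Matrix ι ι R) : A.charpoly.coeff (Fintype.card ι) = 1 := by
  simpa using A.charpoly_monic.coeff_natDegree

end Matrix

section MonicConvolution

variable {R V : Type*} [Semiring R] [AddCommMonoid V] [Module R V] {c : ℕ → R} {n : ℕ}

-- `h`: the coefficients of `c(z) η(z)` in degrees `n, …, n + L - 1` vanish (`c` monic of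
-- degree `n`, `η` of degree `< L`).
theorem eq_zero_of_high_coeffs_mul_monic (hc : c n = 1) {L : ℕ} {η : ℕ → V}
    (hη : ∀ t, L ≤ t → η t = 0) (h : ∀ t < L, ∑ k ∈ range (n + 1), c k • η (t + n - k) = 0) :
    η = 0 := by
  suffices ∀ d t, L ≤ t + d → η t = 0 from funext fun t => this L t (by omega)
  intro d
  induction d with
  | zero => exact hη
  | succ d ih =>
    intro t htd
    by_cases ht : L ≤ t
    · exact hη t ht
    have hlower : ∀ k ∈ range n, c k • η (t + n - k) = 0 := fun k hk => by
      rw [mem_range] at hk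
      rw [ih _ (by omega), smul_zero]
    simpa [sum_range_succ, sum_eq_zero hlower, hc] using h t (by omega)

-- `h`: the coefficients of `c(z) ∑_a q_a z^{-1-a}` in degrees `0, …, n - 1` vanish.
theorem eq_zero_of_low_coeffs_mul_monic (hc : c n = 1) {q : ℕ → V}
    (h : ∀ r < n, ∑ k ∈ range (n + 1), c k • (if r < k then q (k - 1 - r) else 0) = 0) :
    ∀ a < n, q a = 0 := by
  intro a
  induction a using Nat.strong_induction_on with
  | _ a ih =>
    intro ha
    have hlower :
        ∀ k ∈ range n, c k • (if n - 1 - a < k then q (k - 1 - (n - 1 - a)) else 0) = 0 := by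
      intro k hk
      simp only [mem_range] at hk
      split_ifs
      · rw [ih _ (by omega) (by omega), smul_zero]
      · exact smul_zero _
    have := h (n - 1 - a) (by omega)
    rwa [sum_range_succ, sum_eq_zero hlower, if_pos (by omega), hc, one_smul, zero_add,
      show n - 1 - (n - 1 - a) = a by omega] at this

end MonicConvolution

section Hankel

variable {σ ℓ M : ℕ}

def windowComb {R : Type*} [Semiring R] {N : ℕ} (α : Fin N → R)
    (z : ℕ → Fin σ → R) (k : ℕ) : Fin σ → R :=
  ∑ j, α j • z (k + j)

def blockSeq (v : Fin ℓ × Fin σ → ℝ) (t : ℕ) (s : Fin σ) : ℝ :=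
  if h : t < ℓ then v (⟨t, h⟩, s) else 0

theorem dHankel_mulVec_eq_iff (z zb : ℕ → Fin σ → ℝ) (α : Fin (M - ℓ + 1) → ℝ) :
    dHankel ℓ M z *ᵥ α = (fun q : Fin ℓ × Fin σ => zb q.1 q.2) ↔
      ∀ k < ℓ, windowComb α z k = zb k := by
  have happly : ∀ q : Fin ℓ × Fin σ, (dHankel ℓ M z *ᵥ α) q = windowComb α z q.1 q.2 := by
    intro q
    simp [mulVec, dotProduct, dHankel, windowComb, Finset.sum_apply, mul_comm]
  constructor
  · intro h k hk
    ext s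
    simpa [happly] using congrFun h (⟨k, hk⟩, s)
  · intro h
    ext q
    rw [happly, h q.1 q.1.isLt]

theorem vecMul_dHankel_apply (z : ℕ → Fin σ → ℝ) (v : Fin ℓ × Fin σ → ℝ)
    (j : Fin (M - ℓ + 1)) :
    (v ᵥ* dHankel ℓ M z) j = ∑ t ∈ range ℓ, blockSeq v t ⬝ᵥ z (t + j) := by
  rw [← Fin.sum_univ_eq_sum_range (fun t => blockSeq v t ⬝ᵥ z (t + j))]
  simp [vecMul, dotProduct, dHankel, blockSeq, Fintype.sum_prod_type]

theorem eq_zero_of_rank_dHankel_eq {z : ℕ → Fin σ → ℝ} (hz : (dHankel ℓ M z).rank = ℓ * σ)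
    {w : ℕ → Fin σ → ℝ} (hw : ∀ j ≤ M - ℓ, ∑ r ∈ range ℓ, w r ⬝ᵥ z (r + j) = 0) {r : ℕ}
    (hr : r < ℓ) : w r = 0 := by
  set v : Fin ℓ × Fin σ → ℝ := fun q => w q.1 q.2
  have hv : v ᵥ* dHankel ℓ M z = 0 ᵥ* dHankel ℓ M z := by
    ext j
    rw [vecMul_dHankel_apply, zero_vecMul, Pi.zero_apply, ← hw j (by omega)]
    refine sum_congr rfl fun t ht => congrArg (· ⬝ᵥ _) (funext fun s => ?_)
    simp [blockSeq, v, mem_range.mp ht]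
  have := vecMul_injective_of_rank_eq_card (by simpa using hz) hv
  ext s
  exact congrFun this (⟨r, hr⟩, s)

end Hankel

theorem eq_zero_of_rank_ctrbMat_eq {n m : ℕ} {A : Matrix (Fin n) (Fin n) ℝ}
    {B : Matrix (Fin n) (Fin m) ℝ} (hctrb : (ctrbMat A B).rank = n) {ξ : Fin n → ℝ}
    (hξ : ∀ a < n, ξ ᵥ* (A ^ a * B) = 0) : ξ = 0 := by
  refine vecMul_injective_of_rank_eq_card (A := ctrbMat A B) (by simpa using hctrb) ?_
  ext ⟨a, s⟩
  simpa [vecMul, dotProduct, ctrbMat] using congrFun (hξ a a.isLt) s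

def IsStateTraj {R : Type*} [CommRing R] {n m : ℕ} (A : Matrix (Fin n) (Fin n) R)
    (B : Matrix (Fin n) (Fin m) R) (N : ℕ) (u : ℕ → Fin m → R) (x : ℕ → Fin n → R) : Prop :=
  ∀ k, k + 1 < N → x (k + 1) = A *ᵥ x k + B *ᵥ u k

-- The block row `[ξᵀ A^{k-1} B, …, ξᵀ A B, ξᵀ B, η_0, η_1, …]`.
def shiftedRow {R : Type*} [CommRing R] {n m : ℕ} (A : Matrix (Fin n) (Fin n) R)
    (B : Matrix (Fin n) (Fin m) R) (ξ : Fin n → R) (η : ℕ → Fin m → R) (k r : ℕ) : Fin m → R :=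
  if r < k then ξ ᵥ* (A ^ (k - 1 - r) * B) else η (r - k)

section StateSpace

variable {R : Type*} [CommRing R] {n m p : ℕ} {A : Matrix (Fin n) (Fin n) R}
  {B : Matrix (Fin n) (Fin m) R} {N L : ℕ} {u : ℕ → Fin m → R} {x : ℕ → Fin n → R}

theorem IsStateTraj.isStateTraj_windowComb (hx : IsStateTraj A B N u x) (hL : L ≤ N)
    (α : Fin (N - L + 1) → R) : IsStateTraj A B L (windowComb α u) (windowComb α x) := by
  intro k hk
  have hstep : ∀ j : Fin (N - L + 1), x (k + 1 + j) = A *ᵥ x (k + j) + B *ᵥ u (k + j) := by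
    intro j
    rw [add_right_comm]
    exact hx _ (by omega)
  simp only [windowComb, hstep, smul_add, sum_add_distrib, mulVec_sum, mulVec_smul]

theorem windowComb_output {C : Matrix (Fin p) (Fin n) R} {D : Matrix (Fin p) (Fin m) R}
    {y : ℕ → Fin p → R} (hy : ∀ k < N, y k = C *ᵥ x k + D *ᵥ u k) (hL : L ≤ N)
    (α : Fin (N - L + 1) → R) {k : ℕ} (hk : k < L) :
    windowComb α y k = C *ᵥ windowComb α x k + D *ᵥ windowComb α u k := by
  have hout : ∀ j : Fin (N - L + 1), y (k + j) = C *ᵥ x (k + j) + D *ᵥ u (k + j) :=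
    fun j => hy _ (by omega)
  simp only [windowComb, hout, smul_add, sum_add_distrib, mulVec_sum, mulVec_smul]

theorem IsStateTraj.unique {u' : ℕ → Fin m → R} {x' : ℕ → Fin n → R}
    (hx : IsStateTraj A B N u x) (hx' : IsStateTraj A B N u' x')
    (hu : ∀ k, k + 1 < N → u k = u' k) (h0 : x 0 = x' 0) : ∀ k < N, x k = x' k
  | 0, _ => h0
  | k + 1, hk => by
    rw [hx k hk, hx' k hk, hx.unique hx' hu h0 k (by omega), hu k hk]

theorem IsStateTraj.dotProduct_shift (hx : IsStateTraj A B N u x) (ξ : Fin n → R) :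
    ∀ k j, j + k < N → ξ ⬝ᵥ x (j + k) =
      (ξ ᵥ* A ^ k) ⬝ᵥ x j + ∑ r ∈ range k, (ξ ᵥ* (A ^ (k - 1 - r) * B)) ⬝ᵥ u (j + r)
  | 0, j, _ => by simp
  | k + 1, j, hjk => by
    have hterm : ∀ r ∈ range k, ξ ᵥ* (A ^ (k + 1 - 1 - (r + 1)) * B) ⬝ᵥ u (j + (r + 1)) =
        ξ ᵥ* (A ^ (k - 1 - r) * B) ⬝ᵥ u (j + 1 + r) := fun r _ => by
      rw [show k + 1 - 1 - (r + 1) = k - 1 - r by omega, add_comm r 1, add_assoc]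
    rw [show j + (k + 1) = j + 1 + k by omega, hx.dotProduct_shift ξ k (j + 1) (by omega),
      hx j (by omega), sum_range_succ', sum_congr rfl hterm, _root_.dotProduct_add,
      dotProduct_mulVec, dotProduct_mulVec, vecMul_vecMul, vecMul_vecMul, ← pow_succ,
      Nat.add_sub_cancel, Nat.sub_zero, add_zero]
    abel

variable {ξ : Fin n → R} {η : ℕ → Fin m → R}

theorem IsStateTraj.shiftedRow_annihilates (hx : IsStateTraj A B N u x) (hL : 1 ≤ L)
    (hη : ∀ t, L ≤ t → η t = 0)
    (h : ∀ j ≤ N - L, ξ ⬝ᵥ x j + ∑ t ∈ range L, η t ⬝ᵥ u (t + j) = 0)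
    {k ℓ j : ℕ} (hkℓ : k + L ≤ ℓ) (hjk : j + k + L ≤ N) :
    (ξ ᵥ* A ^ k) ⬝ᵥ x j + ∑ r ∈ range ℓ, shiftedRow A B ξ η k r ⬝ᵥ u (r + j) = 0 := by
  have hinput : ∑ t ∈ range (ℓ - k), shiftedRow A B ξ η k (k + t) ⬝ᵥ u (k + t + j) =
      ∑ t ∈ range L, η t ⬝ᵥ u (t + (j + k)) := by
    rw [sum_subset (range_subset_range.2 (by omega : L ≤ ℓ - k))
      (f := fun t => η t ⬝ᵥ u (t + (j + k))) fun t _ ht => by simp [hη t (by simpa using ht)]]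
    refine sum_congr rfl fun t _ => ?_
    rw [shiftedRow, if_neg (by omega), Nat.add_sub_cancel_left,
      show k + t + j = t + (j + k) by omega]
  have hstate : ∑ r ∈ range k, shiftedRow A B ξ η k r ⬝ᵥ u (r + j) =
      ∑ r ∈ range k, (ξ ᵥ* (A ^ (k - 1 - r) * B)) ⬝ᵥ u (j + r) :=
    sum_congr rfl fun r hr => by rw [shiftedRow, if_pos (mem_range.mp hr), add_comm r]
  rw [← Nat.add_sub_cancel' (by omega : k ≤ ℓ), sum_range_add, hinput, hstate, ← add_assoc,
    ← hx.dotProduct_shift ξ k j (by omega)]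
  exact h (j + k) (by omega)

theorem IsStateTraj.charpoly_combination_annihilates [Nontrivial R] (hx : IsStateTraj A B N u x)
    (hL : 1 ≤ L) (hη : ∀ t, L ≤ t → η t = 0)
    (h : ∀ j ≤ N - L, ξ ⬝ᵥ x j + ∑ t ∈ range L, η t ⬝ᵥ u (t + j) = 0)
    {j : ℕ} (hj : j + L + n ≤ N) :
    ∑ r ∈ range (L + n),
      (∑ k ∈ range (n + 1), A.charpoly.coeff k • shiftedRow A B ξ η k r) ⬝ᵥ u (r + j) = 0 := by
  have hrow : ∀ k ∈ range (n + 1), ∑ r ∈ range (L + n), shiftedRow A B ξ η k r ⬝ᵥ u (r + j) =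
      -((ξ ᵥ* A ^ k) ⬝ᵥ x j) := fun k hk => by
    rw [mem_range] at hk
    rw [eq_neg_iff_add_eq_zero, add_comm]
    exact hx.shiftedRow_annihilates hL hη h (by omega) (by omega)
  have hCH : ∑ k ∈ range (n + 1), A.charpoly.coeff k • A ^ k = 0 := by
    simpa using A.sum_range_charpoly_coeff_smul_pow
  simp only [sum_dotProduct, smul_dotProduct]
  rw [sum_comm]
  simp only [← smul_sum]
  rw [sum_congr rfl fun k hk => congrArg _ (hrow k hk)]
  simp only [smul_neg, sum_neg_distrib, ← smul_dotProduct, ← sum_dotProduct, ← vecMul_smul,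
    ← vecMul_sum, hCH, vecMul_zero, zero_dotProduct, neg_zero]

end StateSpace

section Willems

variable {n m : ℕ} {A : Matrix (Fin n) (Fin n) ℝ} {B : Matrix (Fin n) (Fin m) ℝ}
  {M L : ℕ} {u : ℕ → Fin m → ℝ} {x : ℕ → Fin n → ℝ}

theorem IsStateTraj.annihilator_eq_zero (hx : IsStateTraj A B M u x) (hL : 1 ≤ L)
    (hM : L + n ≤ M) (hctrb : (ctrbMat A B).rank = n)
    (hpe : (dHankel (L + n) M u).rank = (L + n) * m) {ξ : Fin n → ℝ} {η : ℕ → Fin m → ℝ}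
    (hη : ∀ t, L ≤ t → η t = 0)
    (h : ∀ j ≤ M - L, ξ ⬝ᵥ x j + ∑ t ∈ range L, η t ⬝ᵥ u (t + j) = 0) :
    ξ = 0 ∧ η = 0 := by
  have hmonic : A.charpoly.coeff n = 1 := by simpa using A.charpoly_coeff_card
  have hw : ∀ r < L + n,
      ∑ k ∈ range (n + 1), A.charpoly.coeff k • shiftedRow A B ξ η k r = 0 := fun r hr =>
    eq_zero_of_rank_dHankel_eq hpe
      (fun j hj => hx.charpoly_combination_annihilates hL hη h (by omega)) hr
  have hη0 : η = 0 := by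
    refine eq_zero_of_high_coeffs_mul_monic hmonic hη fun t ht => ?_
    rw [← hw (t + n) (by omega)]
    refine sum_congr rfl fun k hk => ?_
    rw [mem_range] at hk
    rw [shiftedRow, if_neg (by omega)]
  refine ⟨eq_zero_of_rank_ctrbMat_eq hctrb
    (eq_zero_of_low_coeffs_mul_monic hmonic fun r hr => ?_), hη0⟩
  have := hw r (by omega)
  rwa [hη0] at this

theorem IsStateTraj.exists_windowComb_eq (hx : IsStateTraj A B M u x) (hL : 1 ≤ L)
    (hM : L + n ≤ M) (hctrb : (ctrbMat A B).rank = n)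
    (hpe : (dHankel (L + n) M u).rank = (L + n) * m) (x₀ : Fin n → ℝ) (ub : ℕ → Fin m → ℝ) :
    ∃ α : Fin (M - L + 1) → ℝ, windowComb α x 0 = x₀ ∧ ∀ k < L, windowComb α u k = ub k := by
  set G := fromRows (Matrix.of fun i (j : Fin (M - L + 1)) => x j i) (dHankel L M u)
  have hG : Function.Injective G.vecMul := by
    rw [← coe_vecMulLinear, ← LinearMap.ker_eq_bot, LinearMap.ker_eq_bot']
    intro v hv
    have h : ∀ j ≤ M - L, (v ∘ Sum.inl) ⬝ᵥ x j +
        ∑ t ∈ range L, blockSeq (v ∘ Sum.inr) t ⬝ᵥ u (t + j) = 0 := fun j hj => by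
      have := congrFun hv ⟨j, by omega⟩
      rw [vecMulLinear_apply, vecMul_fromRows, Pi.add_apply, vecMul_dHankel_apply] at this
      simpa [vecMul, dotProduct, mul_comm] using this
    obtain ⟨hξ, hη⟩ := hx.annihilator_eq_zero hL hM hctrb hpe
      (fun t ht => funext fun s => dif_neg (by omega)) h
    ext (i | ⟨t, s⟩)
    · exact congrFun hξ i
    · simpa [blockSeq] using congrFun (congrFun hη t) s
  obtain ⟨α, hα⟩ := mulVec_surjective_of_vecMul_injective hG (Sum.elim x₀ fun q => ub q.1 q.2)
  rw [fromRows_mulVec] at hα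
  refine ⟨α, ?_, (dHankel_mulVec_eq_iff u ub α).mp (by simpa using congrArg (· ∘ Sum.inr) hα)⟩
  ext i
  simpa [windowComb, mulVec, dotProduct, Finset.sum_apply, mul_comm] using congrFun hα (.inl i)

end Willems

/-- **Willems' fundamental lemma (discrete time).**
Let `(A,B)` be controllable and let the input Hankel matrix of depth `L+n` have full
row rank.  Then `(ū, ȳ)` of length `L` is an input-output trajectory of the system
`x_{k+1} = A x_k + B u_k`, `y_k = C x_k + D u_k` if and only if there exists
`α ∈ ℝ^{M-L+1}` with `H_L(u) α = [ū_0; …; ū_{L-1}]` and `H_L(y) α = [ȳ_0; …; ȳ_{L-1}]`. -/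
theorem stmt1 {n m p M L : ℕ} (hL : 1 ≤ L) (hM : L + n ≤ M)
    (A : Matrix (Fin n) (Fin n) ℝ) (B : Matrix (Fin n) (Fin m) ℝ)
    (C : Matrix (Fin p) (Fin n) ℝ) (D : Matrix (Fin p) (Fin m) ℝ)
    (hctrb : (ctrbMat A B).rank = n)
    (u : ℕ → Fin m → ℝ) (x : ℕ → Fin n → ℝ) (y : ℕ → Fin p → ℝ)
    (hx : ∀ k : ℕ, k + 1 < M → x (k + 1) = A.mulVec (x k) + B.mulVec (u k))
    (hy : ∀ k : ℕ, k < M → y k = C.mulVec (x k) + D.mulVec (u k))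
    (hpe : (dHankel (L + n) M u).rank = (L + n) * m)
    (ub : ℕ → Fin m → ℝ) (yb : ℕ → Fin p → ℝ) :
    (∃ xb : ℕ → Fin n → ℝ,
      (∀ k : ℕ, k + 1 < L → xb (k + 1) = A.mulVec (xb k) + B.mulVec (ub k)) ∧
      (∀ k : ℕ, k < L → yb k = C.mulVec (xb k) + D.mulVec (ub k))) ↔
    (∃ α : Fin (M - L + 1) → ℝ,
      (dHankel L M u).mulVec α = (fun q : Fin L × Fin m => ub (q.1 : ℕ) q.2) ∧
      (dHankel L M y).mulVec α = (fun q : Fin L × Fin p => yb (q.1 : ℕ) q.2)) := by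
  have hx : IsStateTraj A B M u x := hx
  have hLM : L ≤ M := by omega
  simp only [dHankel_mulVec_eq_iff]
  constructor
  · rintro ⟨xb, hxb, hyb⟩
    obtain ⟨α, hα₀, hαu⟩ := hx.exists_windowComb_eq hL hM hctrb hpe (xb 0) ub
    have hαx : ∀ k < L, windowComb α x k = xb k :=
      (hx.isStateTraj_windowComb hLM α).unique hxb (fun k hk => hαu k (by omega)) hα₀
    refine ⟨α, hαu, fun k hk => ?_⟩
    rw [windowComb_output hy hLM α hk, hαx k hk, hαu k hk, hyb k hk]
  · rintro ⟨α, hαu, hαy⟩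
    refine ⟨windowComb α x, fun k hk => ?_, fun k hk => ?_⟩
    · rw [hx.isStateTraj_windowComb hLM α k hk, hαu k (by omega)]
    · rw [← hαy k hk, windowComb_output hy hLM α hk, hαu k hk]
end

section
/- Consider the system ẋ(t) = A x(t) + B u(t) with A ∈ ℝ^{n×n}, B ∈ ℝ^{n×m}. Let T > 0, N ∈ ℕ, let u : [0,NT] → ℝ^m be continuously differentiable for all t ∈ [0,NT] with t ≠ iT (i = 1,…,N−1) and continuously differentiable from the right at the instants t = iT, and let x : [0,NT] → ℝ^n solve ẋ = A x + B u. Assume the data (u,x) is persistently excited of order n+1, i.e., for all 0 ≤ t < T, the matrix [H_{1,T}(u_{[0,N−1]}(t)); H_{1,T}(x_{[0,N−1]}(t))] has full row rank m + n. Then for every continuously differentiable ū : [0,T] → ℝ^m and every x̄_0 ∈ ℝ^n, there exists a continuously differentiable α : [0,T) → ℝ^N satisfying, for all 0 ≤ t < T: H_{1,T}(u_{[0,N−1]}(t)) α̇(t) = −H_{1,T}(u̇_{[0,N−1]}(t)) α(t) + ū̇(t), H_{1,T}(x_{[0,N−1]}(t)) α̇(t) = 0, together with the initial-condition constraint H_{1,T}(u_{[0,N−1]}(0))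 α(0) = ū(0) and H_{1,T}(x_{[0,N−1]}(0)) α(0) = x̄_0. -/
open Set Matrix

/-- Time-varying matrix `H_{1,T}(z_{[0,N-1]}(t)) = [z(t), z(t+T), …, z(t+(N-1)T)]`. -/
def H1 {σ : ℕ} (N : ℕ) (T : ℝ) (z : ℝ → Fin σ → ℝ) (t : ℝ) :
    Matrix (Fin σ) (Fin N) ℝ :=
  Matrix.of fun a j => z (t + ((j : ℕ) : ℝ) * T) a

attribute [local instance] Matrix.linftyOpNormedAddCommGroup Matrix.linftyOpNormedSpace
  Matrix.linftyOpNormedRing Matrix.linftyOpNormedAlgebra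

variable {ι κ : Type*} [Fintype ι] [Fintype κ]

noncomputable def matCLM (i : ι) (j : κ) : Matrix ι κ ℝ →L[ℝ] ℝ :=
  LinearMap.toContinuousLinearMap
    { toFun := fun M => M i j, map_add' := fun _ _ => rfl, map_smul' := fun _ _ => rfl }

noncomputable def matCLE : Matrix ι κ ℝ ≃L[ℝ] (ι → κ → ℝ) :=
  LinearEquiv.toContinuousLinearEquiv
    { toFun := fun M => M, invFun := fun M => Matrix.of M,
      map_add' := fun _ _ => rfl, map_smul' := fun _ _ => rfl,
      left_inv := fun _ => rfl, right_inv := fun _ => rfl }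

theorem hasDerivWithinAt_matrix {F : ℝ → Matrix ι κ ℝ} {F' : Matrix ι κ ℝ} {s : Set ℝ} {t : ℝ} :
    HasDerivWithinAt F F' s t ↔ ∀ i j, HasDerivWithinAt (fun τ => F τ i j) (F' i j) s t := by
  constructor
  · intro h i j
    exact ((matCLM i j).hasFDerivAt.comp_hasDerivWithinAt t h :)
  · intro h
    have hp : HasDerivWithinAt (fun τ => (fun i j => F τ i j)) (fun i j => F' i j) s t :=
      hasDerivWithinAt_pi.2 fun i => hasDerivWithinAt_pi.2 fun j => h i j
    exact ((matCLE (ι := ι) (κ := κ)).symm.toContinuousLinearMap.hasFDerivAt.comp_hasDerivWithinAt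
      t hp :)

attribute [local instance] Matrix.linftyOpNormedAddCommGroup Matrix.linftyOpNormedSpace
  Matrix.linftyOpNormedRing Matrix.linftyOpNormedAlgebra

section helpers
variable {ι κ γ : Type*} [Fintype ι] [Fintype κ] {s : Set ℝ} {t : ℝ}

theorem hd_mulVec {F : ℝ → Matrix ι κ ℝ} {F' : Matrix ι κ ℝ} {w : ℝ → κ → ℝ} {w' : κ → ℝ}
    (hF : ∀ i j, HasDerivWithinAt (fun τ => F τ i j) (F' i j) s t)
    (hw : ∀ j, HasDerivWithinAt (fun τ => w τ j) (w' j) s t) (i : ι) :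
    HasDerivWithinAt (fun τ => (F τ).mulVec (w τ) i)
      ((F'.mulVec (w t) + (F t).mulVec w') i) s t := by
  have := HasDerivWithinAt.fun_sum (u := Finset.univ)
    (A := fun j (τ : ℝ) => F τ i j * w τ j)
    (A' := fun j => F' i j * w t j + F t i j * w' j)
    (fun j _ => (hF i j).mul (hw j))
  simpa [Matrix.mulVec, dotProduct, Finset.sum_add_distrib] using this

theorem hd_matmul {F : ℝ → Matrix ι κ ℝ} {F' : Matrix ι κ ℝ}
    {H : ℝ → Matrix κ γ ℝ} {H' : Matrix κ γ ℝ}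
    (hF : ∀ i j, HasDerivWithinAt (fun τ => F τ i j) (F' i j) s t)
    (hH : ∀ i j, HasDerivWithinAt (fun τ => H τ i j) (H' i j) s t) (i : ι) (j : γ) :
    HasDerivWithinAt (fun τ => (F τ * H τ) i j) ((F' * H t + F t * H') i j) s t := by
  have := HasDerivWithinAt.fun_sum (u := Finset.univ)
    (A := fun k (τ : ℝ) => F τ i k * H τ k j)
    (A' := fun k => F' i k * H t k j + F t i k * H' k j)
    (fun k _ => (hF i k).mul (hH k j))
  simpa [Matrix.mul_apply, Finset.sum_add_distrib] using this

theorem contOn_matmul {F : ℝ → Matrix ι κ ℝ} {H : ℝ → Matrix κ γ ℝ}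
    (hF : ∀ i j, ContinuousOn (fun τ => F τ i j) s)
    (hH : ∀ i j, ContinuousOn (fun τ => H τ i j) s) (i : ι) (j : γ) :
    ContinuousOn (fun τ => (F τ * H τ) i j) s := by
  simp only [Matrix.mul_apply]
  exact continuousOn_finset_sum _ fun k _ => (hF i k).mul (hH k j)

theorem contOn_mulVec {F : ℝ → Matrix ι κ ℝ} {w : ℝ → κ → ℝ}
    (hF : ∀ i j, ContinuousOn (fun τ => F τ i j) s)
    (hw : ∀ j, ContinuousOn (fun τ => w τ j) s) (i : ι) :
    ContinuousOn (fun τ => (F τ).mulVec (w τ) i) s := by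
  simp only [Matrix.mulVec, dotProduct]
  exact continuousOn_finset_sum _ fun k _ => (hF i k).mul (hw k)

end helpers

section inv
variable {ι : Type*} [Fintype ι] [DecidableEq ι] {s : Set ℝ} {t : ℝ}

theorem hd_inv {G : ℝ → Matrix ι ι ℝ} {G' : Matrix ι ι ℝ}
    (hG : ∀ i j, HasDerivWithinAt (fun τ => G τ i j) (G' i j) s t)
    (hu : IsUnit (G t)) (i j : ι) :
    HasDerivWithinAt (fun τ => (G τ)⁻¹ i j) ((-((G t)⁻¹ * G' * (G t)⁻¹)) i j) s t := by
  obtain ⟨u, hu'⟩ := hu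
  have hGmat : HasDerivWithinAt G G' s t := hasDerivWithinAt_matrix.2 hG
  have h1 : HasFDerivAt Ring.inverse
      (-ContinuousLinearMap.mulLeftRight ℝ _ (↑u⁻¹) (↑u⁻¹)) (G t) := by
    rw [← hu']; exact hasFDerivAt_ringInverse u
  have h2 : HasDerivWithinAt (fun τ => Ring.inverse (G τ))
      (-((↑u⁻¹ : Matrix ι ι ℝ) * G' * (↑u⁻¹ : Matrix ι ι ℝ))) s t := by
    have h := h1.comp_hasDerivWithinAt t hGmat; simp at h; rw [Matrix.coe_units_inv]; exact h
  have h3 : (↑u⁻¹ : Matrix ι ι ℝ) = (G t)⁻¹ := by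
    rw [← hu', Matrix.coe_units_inv]
  rw [h3] at h2
  have h4 : (fun τ => Ring.inverse (G τ)) = fun τ => (G τ)⁻¹ := by
    funext τ; rw [Matrix.nonsing_inv_eq_ringInverse]
  rw [h4] at h2
  exact hasDerivWithinAt_matrix.1 h2 i j

theorem isUnit_of_rank_eq_card {G : Matrix ι ι ℝ} (h : G.rank = Fintype.card ι) : IsUnit G := by
  rw [← Matrix.mulVec_surjective_iff_isUnit]
  have : LinearMap.range G.mulVecLin = ⊤ := by
    apply Submodule.eq_top_of_finrank_eq
    rw [← Matrix.rank, h, Module.finrank_pi]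
  intro v
  obtain ⟨y, hy⟩ := LinearMap.range_eq_top.1 this v
  exact ⟨y, hy⟩
end inv

/-- Existence of a global `C¹` solution to `ċ = A c + B ub` with `c 0 = xb0`, where `ub`
is continuous. -/
theorem exists_linear_ode_solution {n m : ℕ} (A : Matrix (Fin n) (Fin n) ℝ)
    (B : Matrix (Fin n) (Fin m) ℝ) (ubE : ℝ → Fin m → ℝ) (hubE : Continuous ubE)
    (xb0 : Fin n → ℝ) :
    ∃ c : ℝ → Fin n → ℝ, c 0 = xb0 ∧
      ∀ t, ∀ i, HasDerivAt (fun τ => c τ i) ((A.mulVec (c t) + B.mulVec (ubE t)) i) t := by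
  classical
  set E : ℝ → Matrix (Fin n) (Fin n) ℝ := fun τ => NormedSpace.exp (τ • A) with hE_def
  have hE : ∀ τ, HasDerivAt E (E τ * A) τ := fun τ => hasDerivAt_exp_smul_const A τ
  have hEent : ∀ τ (i j : Fin n), HasDerivAt (fun σ => E σ i j) ((E τ * A) i j) τ := by
    intro τ i j
    exact (matCLM i j).hasFDerivAt.comp_hasDerivAt τ (hE τ)
  have hEcont : ∀ i j, Continuous fun σ => E σ i j := fun i j =>
    continuous_iff_continuousAt.2 fun τ => (hEent τ i j).continuousAt
  set g : ℝ → Fin n → ℝ := fun σ => (E (-σ)).mulVec (B.mulVec (ubE σ)) with hg_def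
  have hgcont : Continuous g := by
    apply continuous_pi
    intro i
    simp only [hg_def, Matrix.mulVec, dotProduct]
    apply continuous_finset_sum
    intro j _
    exact ((hEcont i j).comp continuous_neg).mul
      (continuous_finset_sum _ fun k _ => continuous_const.mul ((continuous_apply k).comp hubE))
  set w : ℝ → Fin n → ℝ := fun τ => ∫ σ in (0:ℝ)..τ, g σ with hw_def
  have hw : ∀ τ, HasDerivAt w (g τ) τ := by
    intro τ
    exact intervalIntegral.integral_hasDerivAt_right (hgcont.intervalIntegrable 0 τ)
      hgcont.aestronglyMeasurable.stronglyMeasurableAtFilter hgcont.continuousAt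
  refine ⟨fun τ => (E τ).mulVec (xb0 + w τ), ?_, ?_⟩
  · have h0 : E 0 = 1 := by simp [hE_def, NormedSpace.exp_zero]
    have hw0 : w 0 = 0 := by simp [hw_def]
    simp [h0, hw0]
  · intro t i
    have hder : HasDerivAt (fun τ => (E τ).mulVec (xb0 + w τ) i)
        (((E t * A).mulVec (xb0 + w t) + (E t).mulVec (g t)) i) t := by
      have : HasDerivWithinAt (fun τ => (E τ).mulVec (xb0 + w τ) i)
          (((E t * A).mulVec (xb0 + w t) + (E t).mulVec (g t)) i) Set.univ t := by
        apply hd_mulVec (fun i j => (hEent t i j).hasDerivWithinAt)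
        intro j
        exact ((hasDerivAt_pi.1 (hw t) j).const_add (xb0 j)).hasDerivWithinAt
      exact this.hasDerivAt (by simp)
    have hcomm : Commute (E t) A := ((Commute.refl A).smul_left t).exp_left
    have key : (E t * A).mulVec (xb0 + w t) + (E t).mulVec (g t)
        = A.mulVec ((E t).mulVec (xb0 + w t)) + B.mulVec (ubE t) := by
      have h1 : E t * A = A * E t := hcomm.eq
      have h2 : E t * E (-t) = 1 := by
        rw [hE_def]
        beta_reduce
        rw [← Matrix.exp_add_of_commute _ _ (((Commute.refl A).smul_left t).smul_right (-t))]
        simp [neg_smul, NormedSpace.exp_zero]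
      calc (E t * A).mulVec (xb0 + w t) + (E t).mulVec (g t)
          = A.mulVec ((E t).mulVec (xb0 + w t)) + (E t * E (-t)).mulVec (B.mulVec (ubE t)) := by
            rw [h1, ← Matrix.mulVec_mulVec]
            simp only [hg_def, Matrix.mulVec_mulVec, Matrix.mul_assoc]
        _ = A.mulVec ((E t).mulVec (xb0 + w t)) + B.mulVec (ubE t) := by
            rw [h2, Matrix.one_mulVec]
    rw [key] at hder
    exact hder
set_option maxHeartbeats 1000000 in
/-- **Existence of the time-varying parameter vector (Lemma 2).**
Let `u` be piecewise continuously differentiable (with right derivatives at the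
instants `iT`), let `x` solve `ẋ = A x + B u`, and let the data `(u,x)` be
persistently excited of order `n+1`.  Then for every continuously differentiable
`ū : [0,T] → ℝ^m` and every `x̄₀ ∈ ℝ^n` there exists a continuously differentiable
`α : [0,T) → ℝ^N` solving the differential equation (6) with initial condition (7). -/
theorem stmt7 {n m N : ℕ}
    (A : Matrix (Fin n) (Fin n) ℝ) (B : Matrix (Fin n) (Fin m) ℝ)
    (T : ℝ) (hT : 0 < T)
    (u du : ℝ → Fin m → ℝ) (x : ℝ → Fin n → ℝ)
    (hud : ∀ i : ℕ, i < N →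
      (∀ t ∈ Set.Ioo ((i : ℝ) * T) (((i : ℝ) + 1) * T), HasDerivAt u (du t) t) ∧
      HasDerivWithinAt u (du ((i : ℝ) * T)) (Set.Ici ((i : ℝ) * T)) ((i : ℝ) * T) ∧
      ContinuousOn du (Set.Ico ((i : ℝ) * T) (((i : ℝ) + 1) * T)))
    (hx : ∀ t ∈ Set.Icc (0:ℝ) ((N : ℝ) * T),
      HasDerivWithinAt x (A.mulVec (x t) + B.mulVec (u t)) (Set.Icc 0 ((N : ℝ) * T)) t)
    (hpe : ∀ t ∈ Set.Ico (0:ℝ) T,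
      (Matrix.fromRows (H1 N T u t) (H1 N T x t)).rank = m + n)
    (ub dub : ℝ → Fin m → ℝ)
    (hub : ∀ t ∈ Set.Icc (0:ℝ) T, HasDerivWithinAt ub (dub t) (Set.Icc 0 T) t)
    (hdub : ContinuousOn dub (Set.Icc 0 T))
    (xb0 : Fin n → ℝ) :
    ∃ α αd : ℝ → Fin N → ℝ,
      (∀ t ∈ Set.Ico (0:ℝ) T, HasDerivWithinAt α (αd t) (Set.Ico 0 T) t) ∧
      ContinuousOn αd (Set.Ico 0 T) ∧
      (∀ t ∈ Set.Ico (0:ℝ) T,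
        (H1 N T u t).mulVec (αd t) = -((H1 N T du t).mulVec (α t)) + dub t ∧
        (H1 N T x t).mulVec (αd t) = 0) ∧
      (H1 N T u 0).mulVec (α 0) = ub 0 ∧
      (H1 N T x 0).mulVec (α 0) = xb0 := by
  classical
  set s : Set ℝ := Set.Ico (0:ℝ) T with hs_def
  have hsub : s ⊆ Set.Icc (0:ℝ) T := Set.Ico_subset_Icc_self
  have h0s : (0:ℝ) ∈ s := ⟨le_refl 0, hT⟩
  -- continuous extension of ub
  have hubcont : ContinuousOn ub (Set.Icc 0 T) := fun τ hτ => (hub τ hτ).continuousWithinAt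
  set ubE : ℝ → Fin m → ℝ := fun τ => ub (max 0 (min T τ)) with hubE_def
  have hclamp_mem : ∀ τ : ℝ, max 0 (min T τ) ∈ Set.Icc (0:ℝ) T :=
    fun τ => ⟨le_max_left _ _, max_le hT.le (min_le_left _ _)⟩
  have hubEcont : Continuous ubE :=
    hubcont.comp_continuous
      (continuous_const.max (continuous_const.min continuous_id)) hclamp_mem
  have hubEeq : ∀ τ ∈ Set.Icc (0:ℝ) T, ubE τ = ub τ := by
    intro τ hτ
    have : max 0 (min T τ) = τ := by
      rw [min_eq_right hτ.2, max_eq_right hτ.1]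
    simp only [hubE_def, this]
  -- solution of the auxiliary linear ODE
  obtain ⟨c, hc0, hc⟩ := exists_linear_ode_solution A B ubE hubEcont xb0
  -- the main matrices
  set M : ℝ → Matrix (Fin m ⊕ Fin n) (Fin N) ℝ :=
    fun τ => Matrix.fromRows (H1 N T u τ) (H1 N T x τ) with hM_def
  set Md : ℝ → Matrix (Fin m ⊕ Fin n) (Fin N) ℝ :=
    fun τ => Matrix.fromRows (H1 N T du τ)
      (A * H1 N T x τ + B * H1 N T u τ) with hMd_def
  set G : ℝ → Matrix (Fin m ⊕ Fin n) (Fin m ⊕ Fin n) ℝ := fun τ => M τ * (M τ)ᵀ with hG_def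
  set K : ℝ → Matrix (Fin m ⊕ Fin n) (Fin m ⊕ Fin n) ℝ := fun τ => (G τ)⁻¹ with hK_def
  set Gd : ℝ → Matrix (Fin m ⊕ Fin n) (Fin m ⊕ Fin n) ℝ :=
    fun τ => Md τ * (M τ)ᵀ + M τ * (Md τ)ᵀ with hGd_def
  set Kd : ℝ → Matrix (Fin m ⊕ Fin n) (Fin m ⊕ Fin n) ℝ :=
    fun τ => -(K τ * Gd τ * K τ) with hKd_def
  set v : ℝ → (Fin m ⊕ Fin n) → ℝ := fun τ => Sum.elim (ub τ) (c τ) with hv_def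
  set vd : ℝ → (Fin m ⊕ Fin n) → ℝ :=
    fun τ => Sum.elim (dub τ) (A.mulVec (c τ) + B.mulVec (ub τ)) with hvd_def
  set P : ℝ → Matrix (Fin N) (Fin m ⊕ Fin n) ℝ := fun τ => (M τ)ᵀ * K τ with hP_def
  set Pd : ℝ → Matrix (Fin N) (Fin m ⊕ Fin n) ℝ :=
    fun τ => (Md τ)ᵀ * K τ + (M τ)ᵀ * Kd τ with hPd_def
  set α : ℝ → Fin N → ℝ := fun τ => (P τ).mulVec (v τ) with hα_def
  set αd : ℝ → Fin N → ℝ :=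
    fun τ => (Pd τ).mulVec (v τ) + (P τ).mulVec (vd τ) with hαd_def
  -- invertibility of G on s
  have hGunit : ∀ t ∈ s, IsUnit (G t) := by
    intro t ht
    apply isUnit_of_rank_eq_card
    have h1 : (G t).rank = (M t).rank := Matrix.rank_self_mul_transpose (M t)
    rw [h1, hM_def, hpe t ht]
    simp [Fintype.card_sum]
  have hGdet : ∀ t ∈ s, IsUnit (G t).det :=
    fun t ht => (Matrix.isUnit_iff_isUnit_det _).1 (hGunit t ht)
  have hMP : ∀ t ∈ s, M t * P t = 1 := by
    intro t ht
    rw [hP_def, ← Matrix.mul_assoc]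
    exact Matrix.mul_nonsing_inv _ (hGdet t ht)
  -- M ⬝ α = v on s
  have hMα : ∀ t ∈ s, (M t).mulVec (α t) = v t := by
    intro t ht
    rw [hα_def, Matrix.mulVec_mulVec, hMP t ht, Matrix.one_mulVec]
  -- shifted derivative facts for u and x
  have hu_shift : ∀ t ∈ s, ∀ j : Fin N,
      HasDerivWithinAt (fun τ => u (τ + ((j:ℕ):ℝ) * T)) (du (t + ((j:ℕ):ℝ) * T)) s t := by
    intro t ht j
    obtain ⟨hIoo, hIci, _⟩ := hud (j:ℕ) j.2
    have hjN : ((j:ℕ):ℝ) + 1 ≤ (N:ℝ) := by exact_mod_cast j.2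
    have hbase : HasDerivWithinAt u (du (t + ((j:ℕ):ℝ) * T))
        (Set.Ici (((j:ℕ):ℝ) * T)) (t + ((j:ℕ):ℝ) * T) := by
      rcases eq_or_lt_of_le ht.1 with h0 | h0
      · have ht0 : t = 0 := h0.symm
        subst ht0
        simpa using hIci
      · have hmem : t + ((j:ℕ):ℝ) * T ∈
            Set.Ioo (((j:ℕ):ℝ) * T) ((((j:ℕ):ℝ) + 1) * T) := by
          constructor
          · linarith
          · have := ht.2; nlinarith
        exact (hIoo _ hmem).hasDerivWithinAt
    have hshift : HasDerivWithinAt (fun τ : ℝ => τ + ((j:ℕ):ℝ) * T) 1 s t := by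
      simpa using (hasDerivWithinAt_id t s).add_const (((j:ℕ):ℝ) * T)
    have hmaps : Set.MapsTo (fun τ : ℝ => τ + ((j:ℕ):ℝ) * T) s
        (Set.Ici (((j:ℕ):ℝ) * T)) := by
      intro τ hτ
      have : (0:ℝ) ≤ τ := hτ.1
      simp only [Set.mem_Ici]
      linarith
    have h := HasDerivWithinAt.scomp t hbase hshift hmaps; simp at h; exact h
  have hx_shift : ∀ t ∈ s, ∀ j : Fin N,
      HasDerivWithinAt (fun τ => x (τ + ((j:ℕ):ℝ) * T))
        (A.mulVec (x (t + ((j:ℕ):ℝ) * T)) + B.mulVec (u (t + ((j:ℕ):ℝ) * T))) s t := by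
    intro t ht j
    have hjN : ((j:ℕ):ℝ) + 1 ≤ (N:ℝ) := by exact_mod_cast j.2
    have hjpos : (0:ℝ) ≤ ((j:ℕ):ℝ) := Nat.cast_nonneg _
    have hmem : t + ((j:ℕ):ℝ) * T ∈ Set.Icc (0:ℝ) ((N:ℝ) * T) := by
      constructor
      · have := ht.1; nlinarith
      · have := ht.2; nlinarith
    have hbase := hx _ hmem
    have hshift : HasDerivWithinAt (fun τ : ℝ => τ + ((j:ℕ):ℝ) * T) 1 s t := by
      simpa using (hasDerivWithinAt_id t s).add_const (((j:ℕ):ℝ) * T)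
    have hmaps : Set.MapsTo (fun τ : ℝ => τ + ((j:ℕ):ℝ) * T) s
        (Set.Icc (0:ℝ) ((N:ℝ) * T)) := by
      intro τ hτ
      have h1 : (0:ℝ) ≤ τ := hτ.1
      have h2 : τ < T := hτ.2
      simp only [Set.mem_Icc]
      constructor
      · nlinarith
      · nlinarith
    have h := HasDerivWithinAt.scomp t hbase hshift hmaps; simp at h; exact h
  -- entrywise derivatives of M
  have hMent : ∀ t ∈ s, ∀ i j, HasDerivWithinAt (fun τ => M τ i j) (Md t i j) s t := by
    rintro t ht (a | a) j
    · exact hasDerivWithinAt_pi.1 (hu_shift t ht j) a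
    · have h := hasDerivWithinAt_pi.1 (hx_shift t ht j) a
      have heq : Md t (Sum.inr a) j
          = (A.mulVec (x (t + ((j:ℕ):ℝ) * T)) + B.mulVec (u (t + ((j:ℕ):ℝ) * T))) a := by
        simp [hMd_def, Matrix.fromRows_apply_inr, Matrix.mul_apply, Matrix.mulVec, dotProduct,
          H1]
      rw [heq]
      exact h
  have hMTent : ∀ t ∈ s, ∀ i j, HasDerivWithinAt (fun τ => (M τ)ᵀ i j) ((Md t)ᵀ i j) s t :=
    fun t ht i j => hMent t ht j i
  have hGent : ∀ t ∈ s, ∀ i j, HasDerivWithinAt (fun τ => G τ i j) (Gd t i j) s t :=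
    fun t ht i j => hd_matmul (hMent t ht) (hMTent t ht) i j
  have hKent : ∀ t ∈ s, ∀ i j, HasDerivWithinAt (fun τ => K τ i j) (Kd t i j) s t := by
    intro t ht i j
    have := hd_inv (hGent t ht) (hGunit t ht) i j
    simpa [hK_def, hKd_def] using this
  have hPent : ∀ t ∈ s, ∀ i j, HasDerivWithinAt (fun τ => P τ i j) (Pd t i j) s t :=
    fun t ht i j => hd_matmul (hMTent t ht) (hKent t ht) i j
  -- entrywise derivative of v
  have hvent : ∀ t ∈ s, ∀ p, HasDerivWithinAt (fun τ => v τ p) (vd t p) s t := by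
    rintro t ht (a | b)
    · exact hasDerivWithinAt_pi.1 ((hub t (hsub ht)).mono hsub) a
    · have h := (hc t b).hasDerivWithinAt (s := s)
      rw [hubEeq t (hsub ht)] at h
      exact h
  -- derivative of α
  have hαent : ∀ t ∈ s, ∀ i, HasDerivWithinAt (fun τ => α τ i) (αd t i) s t :=
    fun t ht i => hd_mulVec (hPent t ht) (hvent t ht) i
  have hα : ∀ t ∈ s, HasDerivWithinAt α (αd t) s t :=
    fun t ht => hasDerivWithinAt_pi.2 fun i => hαent t ht i
  -- continuity facts
  have cMent : ∀ i j, ContinuousOn (fun τ => M τ i j) s :=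
    fun i j t ht => (hMent t ht i j).continuousWithinAt
  have cMTent : ∀ i j, ContinuousOn (fun τ => (M τ)ᵀ i j) s := fun i j => cMent j i
  have cKent : ∀ i j, ContinuousOn (fun τ => K τ i j) s :=
    fun i j t ht => (hKent t ht i j).continuousWithinAt
  have cPent : ∀ i j, ContinuousOn (fun τ => P τ i j) s :=
    fun i j t ht => (hPent t ht i j).continuousWithinAt
  have ccont : ∀ b, ContinuousOn (fun τ => c τ b) s := by
    intro b
    intro t ht
    exact (hc t b).continuousAt.continuousWithinAt
  have cubent : ∀ a, ContinuousOn (fun τ => ub τ a) s := by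
    intro a
    exact ((continuous_apply a).comp_continuousOn (hubcont.mono hsub))
  have cMdent : ∀ i j, ContinuousOn (fun τ => Md τ i j) s := by
    rintro (a | a) j
    · have hcont := (hud (j:ℕ) j.2).2.2
      have hmaps : Set.MapsTo (fun τ : ℝ => τ + ((j:ℕ):ℝ) * T) s
          (Set.Ico (((j:ℕ):ℝ) * T) ((((j:ℕ):ℝ) + 1) * T)) := by
        intro τ hτ
        have h1 : (0:ℝ) ≤ τ := hτ.1
        have h2 : τ < T := hτ.2
        constructor
        · simp only; linarith
        · simp only; nlinarith
      have hshift : ContinuousOn (fun τ : ℝ => τ + ((j:ℕ):ℝ) * T) s :=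
        (continuous_id.add continuous_const).continuousOn
      exact (continuous_apply a).comp_continuousOn (hcont.comp hshift hmaps)
    · have h1 : ContinuousOn (fun τ => (A * H1 N T x τ) a j) s := by
        apply contOn_matmul (F := fun _ => A) (H := fun τ => H1 N T x τ)
          (fun _ _ => continuousOn_const) (fun i k => cMent (Sum.inr i) k)
      have h2 : ContinuousOn (fun τ => (B * H1 N T u τ) a j) s := by
        apply contOn_matmul (F := fun _ => B) (H := fun τ => H1 N T u τ)
          (fun _ _ => continuousOn_const) (fun i k => cMent (Sum.inl i) k)
      exact h1.add h2
  have cMdTent : ∀ i j, ContinuousOn (fun τ => (Md τ)ᵀ i j) s := fun i j => cMdent j i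
  have cGdent : ∀ i j, ContinuousOn (fun τ => Gd τ i j) s := by
    intro i j
    exact (contOn_matmul cMdent cMTent i j).add (contOn_matmul cMent cMdTent i j)
  have cKdent : ∀ i j, ContinuousOn (fun τ => Kd τ i j) s := by
    intro i j
    exact (contOn_matmul (contOn_matmul cKent cGdent) cKent i j).neg
  have cPdent : ∀ i j, ContinuousOn (fun τ => Pd τ i j) s := by
    intro i j
    exact (contOn_matmul cMdTent cKent i j).add (contOn_matmul cMTent cKdent i j)
  have cvent : ∀ p, ContinuousOn (fun τ => v τ p) s := by
    rintro (a | b)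
    · exact cubent a
    · exact ccont b
  have cvdent : ∀ p, ContinuousOn (fun τ => vd τ p) s := by
    rintro (a | b)
    · exact (continuous_apply a).comp_continuousOn (hdub.mono hsub)
    · have h1 : ContinuousOn (fun τ => A.mulVec (c τ) b) s :=
        contOn_mulVec (F := fun _ => A) (fun _ _ => continuousOn_const) ccont b
      have h2 : ContinuousOn (fun τ => B.mulVec (ub τ) b) s :=
        contOn_mulVec (F := fun _ => B) (fun _ _ => continuousOn_const) cubent b
      exact h1.add h2
  have cαd : ContinuousOn αd s := by
    apply continuousOn_pi.2
    intro i
    exact (contOn_mulVec cPdent cvent i).add (contOn_mulVec cPent cvdent i)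
  -- the key algebraic identity
  have hMPd : ∀ t ∈ s, M t * Pd t = -(Md t * P t) := by
    intro t ht
    have hGK : G t * K t = 1 := Matrix.mul_nonsing_inv _ (hGdet t ht)
    have h1 : M t * Pd t = M t * (Md t)ᵀ * K t + (G t) * Kd t := by
      rw [hPd_def]
      simp only [Matrix.mul_add, Matrix.mul_assoc, hG_def]
    have h2 : G t * Kd t = -(Gd t * K t) := by
      rw [hKd_def]
      have : G t * (K t * Gd t * K t) = Gd t * K t := by
        rw [show K t * Gd t * K t = K t * (Gd t * K t) from by rw [Matrix.mul_assoc],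
          ← Matrix.mul_assoc, hGK, Matrix.one_mul]
      rw [Matrix.mul_neg, this]
    have h3 : Gd t * K t = Md t * P t + M t * (Md t)ᵀ * K t := by
      rw [hGd_def, hP_def]
      simp only [Matrix.add_mul, Matrix.mul_assoc]
    rw [h1, h2, h3]
    abel
  have hMαd : ∀ t ∈ s, (M t).mulVec (αd t) = -((Md t).mulVec (α t)) + vd t := by
    intro t ht
    rw [hαd_def]
    simp only [Matrix.mulVec_add, Matrix.mulVec_mulVec]
    rw [hMPd t ht, hMP t ht, Matrix.one_mulVec, Matrix.neg_mulVec, hα_def,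
      Matrix.mulVec_mulVec]
  refine ⟨α, αd, hα, cαd, ?_, ?_, ?_⟩
  · intro t ht
    have hMαt := hMα t ht
    have hMαdt := hMαd t ht
    have hu_comp : (H1 N T u t).mulVec (α t) = ub t := by
      funext a
      have := congrFun hMαt (Sum.inl a)
      simpa [hM_def, hv_def, Matrix.fromRows_mulVec] using this
    have hx_comp : (H1 N T x t).mulVec (α t) = c t := by
      funext a
      have := congrFun hMαt (Sum.inr a)
      simpa [hM_def, hv_def, Matrix.fromRows_mulVec] using this
    constructor
    · funext a
      have := congrFun hMαdt (Sum.inl a)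
      simpa [hM_def, hMd_def, hv_def, hvd_def, Matrix.fromRows_mulVec] using this
    · funext a
      have h := congrFun hMαdt (Sum.inr a)
      have hlhs : (M t).mulVec (αd t) (Sum.inr a) = (H1 N T x t).mulVec (αd t) a := by
        simp [hM_def, Matrix.fromRows_mulVec]
      have hrhs : (-((Md t).mulVec (α t)) + vd t) (Sum.inr a) = 0 := by
        have hMdα : ((A * H1 N T x t + B * H1 N T u t)).mulVec (α t)
            = A.mulVec (c t) + B.mulVec (ub t) := by
          rw [Matrix.add_mulVec, ← Matrix.mulVec_mulVec, ← Matrix.mulVec_mulVec,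
            hu_comp, hx_comp]
        simp [hMd_def, hvd_def, Matrix.fromRows_mulVec, hMdα]
      rw [hlhs] at h
      rw [h, hrhs]
      simp
  · funext a
    have := congrFun (hMα 0 h0s) (Sum.inl a)
    simpa [hM_def, hv_def, Matrix.fromRows_mulVec] using this
  · funext a
    have := congrFun (hMα 0 h0s) (Sum.inr a)
    simpa [hM_def, hv_def, hc0, Matrix.fromRows_mulVec] using this
end

section
/- Consider the system ẋ(t) = A x(t) + B u(t), y(t) = C x(t) + D u(t) with A ∈ ℝ^{n×n}, B ∈ ℝ^{n×m}, C ∈ ℝ^{p×n}, D ∈ ℝ^{p×m}. Let T > 0, N ∈ ℕ, let u : [0,NT] → ℝ^m be continuously differentiable on each interval [iT,(i+1)T) (differentiable from the right at the instants iT), let x : [0,NT] → ℝ^n solve ẋ = A x + B u, and let y = C x + D u. Suppose α : [0,T) → ℝ^N is continuously differentiable and satisfies, for all 0 ≤ t < T: H_{1,T}(u_{[0,N−1]}(t)) α̇(t) = −H_{1,T}(u̇_{[0,N−1]}(t)) α(t) + ū̇(t), H_{1,T}(x_{[0,N−1]}(t)) α̇(t) = 0, H_{1,T}(u_{[0,N−1]}(t))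 α(t) = ū(t), and H_{1,T}(y_{[0,N−1]}(t)) α(t) = ȳ(t), where ū : [0,T] → ℝ^m is continuously differentiable and ȳ : [0,T] → ℝ^p. Then x̄(t) := H_{1,T}(x_{[0,N−1]}(t)) α(t) satisfies ẋ̄(t) = A x̄(t) + B ū(t) and ȳ(t) = C x̄(t) + D ū(t) for all 0 ≤ t < T; in particular, (ū, ȳ) is an input-output trajectory of the system with initial condition x̄(0) = H_{1,T}(x_{[0,N−1]}(0)) α(0). -/
open Set Matrix

lemma key_swap {q r N : ℕ} (M : Matrix (Fin q) (Fin r) ℝ) (T t : ℝ) (z : ℝ → Fin r → ℝ)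
    (v : Fin N → ℝ) (a : Fin q) :
    ∑ j : Fin N, (M.mulVec (z (t+((j:ℕ):ℝ)*T))) a * v j
      = M.mulVec ((H1 N T z t).mulVec v) a := by
  simp only [Matrix.mulVec, dotProduct, H1, Matrix.of_apply, Finset.sum_mul, Finset.mul_sum]
  rw [Finset.sum_comm]
  apply Finset.sum_congr rfl; intro b _
  apply Finset.sum_congr rfl; intro j _
  ring


/-- **Sufficiency part of the continuous-time Willems' lemma (Theorem 2).**
If `α` is continuously differentiable and satisfies the differential equation (6) and
the trajectory equations (8), then `x̄(t) := H_{1,T}(x_{[0,N-1]}(t)) α(t)` satisfies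
`ẋ̄ = A x̄ + B ū` and `ȳ = C x̄ + D ū` on `[0,T)`; in particular `(ū, ȳ)` is an
input-output trajectory with initial condition `x̄(0) = H_{1,T}(x_{[0,N-1]}(0)) α(0)`. -/
theorem stmt9 {n m p N : ℕ}
    (A : Matrix (Fin n) (Fin n) ℝ) (B : Matrix (Fin n) (Fin m) ℝ)
    (C : Matrix (Fin p) (Fin n) ℝ) (D : Matrix (Fin p) (Fin m) ℝ)
    (T : ℝ) (hT : 0 < T)
    (u du : ℝ → Fin m → ℝ) (x : ℝ → Fin n → ℝ) (y : ℝ → Fin p → ℝ)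
    (hud : ∀ i : ℕ, i < N →
      (∀ t ∈ Set.Ioo ((i : ℝ) * T) (((i : ℝ) + 1) * T), HasDerivAt u (du t) t) ∧
      HasDerivWithinAt u (du ((i : ℝ) * T)) (Set.Ici ((i : ℝ) * T)) ((i : ℝ) * T) ∧
      ContinuousOn du (Set.Ico ((i : ℝ) * T) (((i : ℝ) + 1) * T)))
    (hx : ∀ t ∈ Set.Icc (0:ℝ) ((N : ℝ) * T),
      HasDerivWithinAt x (A.mulVec (x t) + B.mulVec (u t)) (Set.Icc 0 ((N : ℝ) * T)) t)
    (hy : ∀ t ∈ Set.Icc (0:ℝ) ((N : ℝ) * T), y t = C.mulVec (x t) + D.mulVec (u t))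
    (ub dub : ℝ → Fin m → ℝ) (yb : ℝ → Fin p → ℝ)
    (hub : ∀ t ∈ Set.Icc (0:ℝ) T, HasDerivWithinAt ub (dub t) (Set.Icc 0 T) t)
    (hdub : ContinuousOn dub (Set.Icc 0 T))
    (α αd : ℝ → Fin N → ℝ)
    (hα : ∀ t ∈ Set.Ico (0:ℝ) T, HasDerivWithinAt α (αd t) (Set.Ico 0 T) t)
    (hαd : ContinuousOn αd (Set.Ico 0 T))
    (hode : ∀ t ∈ Set.Ico (0:ℝ) T,
      (H1 N T u t).mulVec (αd t) = -((H1 N T du t).mulVec (α t)) + dub t ∧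
      (H1 N T x t).mulVec (αd t) = 0)
    (htraj : ∀ t ∈ Set.Ico (0:ℝ) T,
      (H1 N T u t).mulVec (α t) = ub t ∧
      (H1 N T y t).mulVec (α t) = yb t) :
    ∀ t ∈ Set.Ico (0:ℝ) T,
      HasDerivWithinAt (fun s => (H1 N T x s).mulVec (α s))
        (A.mulVec ((H1 N T x t).mulVec (α t)) + B.mulVec (ub t)) (Set.Ico 0 T) t ∧
      yb t = C.mulVec ((H1 N T x t).mulVec (α t)) + D.mulVec (ub t) := by
  intro t ht
  obtain ⟨ht0, htT⟩ := ht
  have hmem : ∀ j : Fin N, t + ((j:ℕ):ℝ) * T ∈ Set.Icc (0:ℝ) ((N:ℝ) * T) := by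
    intro j
    have hj : ((j:ℕ):ℝ) + 1 ≤ (N:ℝ) := by exact_mod_cast j.2
    have hj0 : (0:ℝ) ≤ ((j:ℕ):ℝ) := Nat.cast_nonneg _
    constructor
    · nlinarith
    · nlinarith
  constructor
  · apply hasDerivWithinAt_pi.2
    intro a
    have key : ∀ j : Fin N, HasDerivWithinAt
        (fun s => x (s + ((j:ℕ):ℝ)*T) a * α s j)
        ((A.mulVec (x (t+((j:ℕ):ℝ)*T)) + B.mulVec (u (t+((j:ℕ):ℝ)*T))) a * α t j
          + x (t+((j:ℕ):ℝ)*T) a * αd t j) (Set.Ico 0 T) t := by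
      intro j
      have hmap : Set.MapsTo (fun s => s + ((j:ℕ):ℝ)*T) (Set.Ico 0 T)
          (Set.Icc (0:ℝ) ((N:ℝ)*T)) := by
        intro s hs
        have hj : ((j:ℕ):ℝ) + 1 ≤ (N:ℝ) := by exact_mod_cast j.2
        have hj0 : (0:ℝ) ≤ ((j:ℕ):ℝ) := Nat.cast_nonneg _
        constructor
        · simp only; nlinarith [hs.1]
        · simp only; nlinarith [hs.2]
      have hcomp : HasDerivWithinAt (fun s => x (s + ((j:ℕ):ℝ)*T))
          (A.mulVec (x (t+((j:ℕ):ℝ)*T)) + B.mulVec (u (t+((j:ℕ):ℝ)*T))) (Set.Ico 0 T) t := by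
        have hid : HasDerivWithinAt (fun s : ℝ => s + ((j:ℕ):ℝ)*T) 1 (Set.Ico 0 T) t := by
          simpa using (hasDerivWithinAt_id t (Set.Ico (0:ℝ) T)).add_const (((j:ℕ):ℝ)*T)
        have := (hx _ (hmem j)).scomp t hid hmap
        rw [one_smul] at this
        exact this
      exact (hasDerivWithinAt_pi.1 hcomp a).mul (hasDerivWithinAt_pi.1 (hα t ⟨ht0, htT⟩) j)
    have hsum := HasDerivWithinAt.fun_sum (fun j (_ : j ∈ Finset.univ) => key j)
    have hfeq : (fun s => (H1 N T x s).mulVec (α s) a)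
        = fun s => ∑ j : Fin N, x (s + ((j:ℕ):ℝ)*T) a * α s j := by
      funext s
      simp [H1, Matrix.mulVec, dotProduct]
    rw [show (fun s => (H1 N T x s).mulVec (α s) a) = _ from hfeq]
    convert hsum using 1
    have hz : ∑ j : Fin N, x (t + ((j:ℕ):ℝ)*T) a * αd t j = 0 := by
      have := congrFun ((hode t ⟨ht0, htT⟩).2) a
      simpa [H1, Matrix.mulVec, dotProduct] using this
    have hu : (H1 N T u t).mulVec (α t) = ub t := (htraj t ⟨ht0, htT⟩).1
    rw [Finset.sum_add_distrib]
    simp only [Pi.add_apply, add_mul]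
    rw [Finset.sum_add_distrib, hz, add_zero, key_swap A T t x (α t) a,
      key_swap B T t u (α t) a, hu]
  · have hyb : (H1 N T y t).mulVec (α t) = yb t := (htraj t ⟨ht0, htT⟩).2
    have hu : (H1 N T u t).mulVec (α t) = ub t := (htraj t ⟨ht0, htT⟩).1
    rw [← hyb, ← hu]
    funext a
    have hC := key_swap C T t x (α t) a
    have hD := key_swap D T t u (α t) a
    simp only [Pi.add_apply]
    rw [← hC, ← hD, ← Finset.sum_add_distrib]
    simp only [H1, Matrix.mulVec, dotProduct, Matrix.of_apply]
    refine Finset.sum_congr rfl fun j _ => ?_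
    rw [hy _ (hmem j)]
    simp [Matrix.mulVec, dotProduct, add_mul]
end

section
/- Consider the system ẋ(t) = A x(t) + B u(t), y(t) = C x(t) + D u(t) with A ∈ ℝ^{n×n}, B ∈ ℝ^{n×m}, C ∈ ℝ^{p×n}, D ∈ ℝ^{p×m}. Let T > 0, N ∈ ℕ, let u : [0,NT] → ℝ^m be continuously differentiable on each interval [iT,(i+1)T) (differentiable from the right at the instants iT), let x : [0,NT] → ℝ^n solve ẋ = A x + B u, and let y = C x + D u. Let ū : [0,T] → ℝ^m be continuously differentiable and let (ū, ȳ) be an input-output trajectory of the system with initial state x̄(0), i.e., there exists differentiable x̄ : [0,T) → ℝ^n with ẋ̄ = A x̄ + B ū, initial value x̄(0), and ȳ = C x̄ + D ū. Then any continuously differentiable α : [0,T) → ℝ^N satisfying, for all 0 ≤ t < T, H_{1,T}(u_{[0,N−1]}(t)) α̇(t) = −H_{1,T}(u̇_{[0,N−1]}(t)) α(t) + ū̇(t) and H_{1,T}(x_{[0,N−1]}(t)) α̇(t) = 0, together with H_{1,T}(u_{[0,N−1]}(0)) α(0) = ū(0) and H_{1,T}(x_{[0,N−1]}(0)) α(0)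 = x̄(0), also satisfies H_{1,T}(u_{[0,N−1]}(t)) α(t) = ū(t), H_{1,T}(x_{[0,N−1]}(t)) α(t) = x̄(t), and H_{1,T}(y_{[0,N−1]}(t)) α(t) = ȳ(t) for all 0 ≤ t < T. -/
open Set Matrix

lemma H1_mulVec {σ N : ℕ} (T : ℝ) (z : ℝ → Fin σ → ℝ) (t : ℝ) (v : Fin N → ℝ) :
    (H1 N T z t).mulVec v = ∑ j : Fin N, v j • z (t + ((j : ℕ) : ℝ) * T) := by
  funext a
  simp [H1, Matrix.mulVec, dotProduct, Finset.sum_apply, mul_comm]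

lemma mulVec_sum_smul {n' σ N : ℕ} (M : Matrix (Fin n') (Fin σ) ℝ)
    (c : Fin N → ℝ) (w : Fin N → Fin σ → ℝ) :
    ∑ j : Fin N, c j • M.mulVec (w j) = M.mulVec (∑ j : Fin N, c j • w j) := by
  rw [show (M.mulVec (∑ j : Fin N, c j • w j)) = M.mulVecLin (∑ j : Fin N, c j • w j) from rfl,
    map_sum]
  simp [Matrix.mulVecLin]

/-- **Necessity part of the continuous-time Willems' lemma (Theorem 2).**
If `(ū, ȳ)` is an input-output trajectory of the system with state `x̄`, then any
continuously differentiable `α` solving the differential equation (6) with initial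
condition (7) also satisfies the trajectory equations
`H_{1,T}(u(t)) α(t) = ū(t)`, `H_{1,T}(x(t)) α(t) = x̄(t)`, `H_{1,T}(y(t)) α(t) = ȳ(t)`. -/
theorem stmt10 {n m p N : ℕ}
    (A : Matrix (Fin n) (Fin n) ℝ) (B : Matrix (Fin n) (Fin m) ℝ)
    (C : Matrix (Fin p) (Fin n) ℝ) (D : Matrix (Fin p) (Fin m) ℝ)
    (T : ℝ) (hT : 0 < T)
    (u du : ℝ → Fin m → ℝ) (x : ℝ → Fin n → ℝ) (y : ℝ → Fin p → ℝ)
    (hud : ∀ i : ℕ, i < N →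
      (∀ t ∈ Set.Ioo ((i : ℝ) * T) (((i : ℝ) + 1) * T), HasDerivAt u (du t) t) ∧
      HasDerivWithinAt u (du ((i : ℝ) * T)) (Set.Ici ((i : ℝ) * T)) ((i : ℝ) * T) ∧
      ContinuousOn du (Set.Ico ((i : ℝ) * T) (((i : ℝ) + 1) * T)))
    (hx : ∀ t ∈ Set.Icc (0:ℝ) ((N : ℝ) * T),
      HasDerivWithinAt x (A.mulVec (x t) + B.mulVec (u t)) (Set.Icc 0 ((N : ℝ) * T)) t)
    (hy : ∀ t ∈ Set.Icc (0:ℝ) ((N : ℝ) * T), y t = C.mulVec (x t) + D.mulVec (u t))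
    (ub dub : ℝ → Fin m → ℝ) (yb : ℝ → Fin p → ℝ) (xb : ℝ → Fin n → ℝ)
    (hub : ∀ t ∈ Set.Icc (0:ℝ) T, HasDerivWithinAt ub (dub t) (Set.Icc 0 T) t)
    (hdub : ContinuousOn dub (Set.Icc 0 T))
    (hxb : ∀ t ∈ Set.Ico (0:ℝ) T,
      HasDerivWithinAt xb (A.mulVec (xb t) + B.mulVec (ub t)) (Set.Ico 0 T) t)
    (hyb : ∀ t ∈ Set.Ico (0:ℝ) T, yb t = C.mulVec (xb t) + D.mulVec (ub t))
    (α αd : ℝ → Fin N → ℝ)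
    (hα : ∀ t ∈ Set.Ico (0:ℝ) T, HasDerivWithinAt α (αd t) (Set.Ico 0 T) t)
    (hαd : ContinuousOn αd (Set.Ico 0 T))
    (hode : ∀ t ∈ Set.Ico (0:ℝ) T,
      (H1 N T u t).mulVec (αd t) = -((H1 N T du t).mulVec (α t)) + dub t ∧
      (H1 N T x t).mulVec (αd t) = 0)
    (hic : (H1 N T u 0).mulVec (α 0) = ub 0 ∧ (H1 N T x 0).mulVec (α 0) = xb 0) :
    ∀ t ∈ Set.Ico (0:ℝ) T,
      (H1 N T u t).mulVec (α t) = ub t ∧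
      (H1 N T x t).mulVec (α t) = xb t ∧
      (H1 N T y t).mulVec (α t) = yb t := by
  -- shift constants
  set c : Fin N → ℝ := fun j => ((j : ℕ) : ℝ) * T with hc
  have hc_nonneg : ∀ j : Fin N, 0 ≤ c j := fun j => by
    have : (0:ℝ) ≤ ((j : ℕ) : ℝ) := Nat.cast_nonneg _
    positivity
  have hcN : ∀ j : Fin N, c j + T ≤ (N : ℝ) * T := fun j => by
    have h1 : ((j : ℕ) : ℝ) + 1 ≤ (N : ℝ) := by exact_mod_cast Nat.succ_le_of_lt j.isLt
    have : (((j : ℕ) : ℝ) + 1) * T ≤ (N : ℝ) * T := by nlinarith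
    simp only [hc]; nlinarith
  -- derivative of shifted components within Ico 0 T
  have hα' : ∀ (j : Fin N), ∀ t ∈ Set.Ico (0:ℝ) T,
      HasDerivWithinAt (fun s => α s j) (αd t j) (Set.Ico 0 T) t := by
    intro j t ht
    exact hasDerivWithinAt_pi.1 (hα t ht) j
  have hshift : ∀ (j : Fin N), ∀ t ∈ Set.Ico (0:ℝ) T,
      HasDerivWithinAt (fun s : ℝ => s + c j) 1 (Set.Ico 0 T) t := by
    intro j t ht
    simpa using ((hasDerivAt_id t).add_const (c j)).hasDerivWithinAt
  have hu' : ∀ (j : Fin N), ∀ t ∈ Set.Ico (0:ℝ) T,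
      HasDerivWithinAt (fun s => u (s + c j)) (du (t + c j)) (Set.Ico 0 T) t := by
    intro j t ht
    obtain ⟨hInt, hEnd, _⟩ := hud j j.isLt
    have houter : HasDerivWithinAt u (du (t + c j)) (Set.Ici (c j)) (t + c j) := by
      rcases eq_or_lt_of_le ht.1 with h0 | h0
      · have : t + c j = c j := by rw [← h0]; ring
        rw [this]
        simpa [hc] using hEnd
      · refine (hInt (t + c j) ?_).hasDerivWithinAt
        constructor
        · simp only [hc]; linarith
        · have := ht.2; simp only [hc]; nlinarith
    have hmaps : Set.MapsTo (fun s : ℝ => s + c j) (Set.Ico 0 T) (Set.Ici (c j)) := by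
      intro s hs
      show c j ≤ s + c j
      linarith [hs.1]
    have := houter.scomp t (hshift j t ht) hmaps
    simpa [Function.comp_def] using this
  have hx' : ∀ (j : Fin N), ∀ t ∈ Set.Ico (0:ℝ) T,
      HasDerivWithinAt (fun s => x (s + c j))
        (A.mulVec (x (t + c j)) + B.mulVec (u (t + c j))) (Set.Ico 0 T) t := by
    intro j t ht
    have hmem : t + c j ∈ Set.Icc (0:ℝ) ((N : ℝ) * T) := by
      constructor
      · linarith [ht.1, hc_nonneg j]
      · have := hcN j; linarith [ht.2]
    have hmaps : Set.MapsTo (fun s : ℝ => s + c j) (Set.Ico 0 T) (Set.Icc 0 ((N : ℝ) * T)) := by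
      intro s hs
      refine ⟨?_, ?_⟩
      · show (0:ℝ) ≤ s + c j
        linarith [hs.1, hc_nonneg j]
      · show s + c j ≤ (N : ℝ) * T
        have := hcN j; linarith [hs.2]
    have := (hx (t + c j) hmem).scomp t (hshift j t ht) hmaps
    simpa [Function.comp_def] using this
  -- the two combined signals
  set F : ℝ → Fin m → ℝ := fun s => ∑ j : Fin N, α s j • u (s + c j) with hFdef
  set G : ℝ → Fin n → ℝ := fun s => ∑ j : Fin N, α s j • x (s + c j) with hGdef
  have hFeq : ∀ s, (H1 N T u s).mulVec (α s) = F s := fun s => H1_mulVec T u s (α s)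
  have hGeq : ∀ s, (H1 N T x s).mulVec (α s) = G s := fun s => H1_mulVec T x s (α s)
  -- derivative of F
  have hF' : ∀ t ∈ Set.Ico (0:ℝ) T, HasDerivWithinAt F (dub t) (Set.Ico 0 T) t := by
    intro t ht
    have hsum : HasDerivWithinAt F
        (∑ j : Fin N, (α t j • du (t + c j) + αd t j • u (t + c j))) (Set.Ico 0 T) t := by
      apply HasDerivWithinAt.fun_sum
      intro j _
      exact (hα' j t ht).smul (hu' j t ht)
    have heq : (∑ j : Fin N, (α t j • du (t + c j) + αd t j • u (t + c j))) = dub t := by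
      rw [Finset.sum_add_distrib]
      have e1 : (∑ j : Fin N, α t j • du (t + c j)) = (H1 N T du t).mulVec (α t) :=
        (H1_mulVec T du t (α t)).symm
      have e2 : (∑ j : Fin N, αd t j • u (t + c j)) = (H1 N T u t).mulVec (αd t) :=
        (H1_mulVec T u t (αd t)).symm
      rw [e1, e2, (hode t ht).1]
      abel
    rwa [heq] at hsum
  -- F = ub on [0, T)
  have hFub : ∀ t ∈ Set.Ico (0:ℝ) T, F t = ub t := by
    intro t ht
    have hsub : Set.Icc (0:ℝ) t ⊆ Set.Ico 0 T := fun s hs => ⟨hs.1, lt_of_le_of_lt hs.2 ht.2⟩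
    have hcont : ContinuousOn (fun s => F s - ub s) (Set.Icc 0 t) := by
      intro s hs
      exact (((hF' s (hsub hs)).sub
        ((hub s (Set.Ico_subset_Icc_self (hsub hs))).mono
          Set.Ico_subset_Icc_self)).continuousWithinAt).mono hsub
    have hderiv : ∀ s ∈ Set.Ico (0:ℝ) t, HasDerivWithinAt (fun s => F s - ub s) 0
        (Set.Ici s) s := by
      intro s hs
      have hsIco : s ∈ Set.Ico (0:ℝ) T := ⟨hs.1, lt_trans hs.2 ht.2⟩
      have hd : HasDerivWithinAt (fun s => F s - ub s) (dub s - dub s) (Set.Ico 0 T) s :=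
        (hF' s hsIco).sub ((hub s (Set.Ico_subset_Icc_self hsIco)).mono Set.Ico_subset_Icc_self)
      rw [sub_self] at hd
      refine hd.mono_of_mem_nhdsWithin ?_
      refine mem_nhdsWithin.2 ⟨Set.Iio T, isOpen_Iio, hsIco.2, ?_⟩
      intro z hz
      exact ⟨le_trans hsIco.1 hz.2, hz.1⟩
    have := constant_of_has_deriv_right_zero hcont hderiv t ⟨ht.1, le_rfl⟩
    have h0 : F 0 - ub 0 = 0 := by
      rw [← hFeq 0, hic.1, sub_self]
    rw [h0] at this
    exact sub_eq_zero.1 this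
  -- derivative of G
  have hG' : ∀ t ∈ Set.Ico (0:ℝ) T,
      HasDerivWithinAt G (A.mulVec (G t) + B.mulVec (ub t)) (Set.Ico 0 T) t := by
    intro t ht
    have hsum : HasDerivWithinAt G
        (∑ j : Fin N, (α t j • (A.mulVec (x (t + c j)) + B.mulVec (u (t + c j)))
          + αd t j • x (t + c j))) (Set.Ico 0 T) t := by
      apply HasDerivWithinAt.fun_sum
      intro j _
      exact (hα' j t ht).smul (hx' j t ht)
    have heq : (∑ j : Fin N, (α t j • (A.mulVec (x (t + c j)) + B.mulVec (u (t + c j)))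
          + αd t j • x (t + c j))) = A.mulVec (G t) + B.mulVec (ub t) := by
      rw [Finset.sum_add_distrib]
      have e0 : (∑ j : Fin N, αd t j • x (t + c j)) = (H1 N T x t).mulVec (αd t) :=
        (H1_mulVec T x t (αd t)).symm
      rw [e0, (hode t ht).2, add_zero]
      have e1 : (∑ j : Fin N, α t j • (A.mulVec (x (t + c j)) + B.mulVec (u (t + c j))))
          = (∑ j : Fin N, α t j • A.mulVec (x (t + c j)))
            + (∑ j : Fin N, α t j • B.mulVec (u (t + c j))) := by
        rw [← Finset.sum_add_distrib]
        simp [smul_add]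
      rw [e1, mulVec_sum_smul, mulVec_sum_smul, ← hFub t ht]
    rwa [heq] at hsum
  -- G = xb on [0,T) by ODE uniqueness
  set L : (Fin n → ℝ) →L[ℝ] (Fin n → ℝ) :=
    LinearMap.toContinuousLinearMap (Matrix.mulVecLin A) with hL
  have hLA : ∀ z, L z = A.mulVec z := fun z => rfl
  have hv : ∀ s : ℝ, LipschitzOnWith ‖L‖₊
      (fun z : Fin n → ℝ => A.mulVec z + B.mulVec (ub s)) Set.univ := by
    intro s
    apply LipschitzWith.lipschitzOnWith
    apply LipschitzWith.of_dist_le_mul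
    intro z1 z2
    have := L.lipschitz.dist_le_mul z1 z2
    simpa [hLA, dist_add_right] using this
  have hGxb : ∀ t ∈ Set.Ico (0:ℝ) T, G t = xb t := by
    intro t ht
    have hsub : Set.Icc (0:ℝ) t ⊆ Set.Ico 0 T := fun s hs => ⟨hs.1, lt_of_le_of_lt hs.2 ht.2⟩
    have hmem' : ∀ s ∈ Set.Ico (0:ℝ) t, s ∈ Set.Ico (0:ℝ) T :=
      fun s hs => ⟨hs.1, lt_trans hs.2 ht.2⟩
    have hmono : ∀ s ∈ Set.Ico (0:ℝ) t, Set.Ico (0:ℝ) T ∈ nhdsWithin s (Set.Ici s) := by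
      intro s hs
      refine mem_nhdsWithin.2 ⟨Set.Iio T, isOpen_Iio, (hmem' s hs).2, ?_⟩
      intro z hz
      exact ⟨le_trans (hmem' s hs).1 hz.2, hz.1⟩
    have := ODE_solution_unique_of_mem_Icc_right (v := fun s z => A.mulVec z + B.mulVec (ub s))
      (s := fun _ => Set.univ) (K := ‖L‖₊) (f := G) (g := xb) (a := 0) (b := t)
      (fun s _ => hv s)
      (fun s hs => ((hG' s (hsub hs)).continuousWithinAt).mono hsub)
      (fun s hs => (hG' s (hmem' s hs)).mono_of_mem_nhdsWithin (hmono s hs))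
      (fun s _ => Set.mem_univ _)
      (fun s hs => ((hxb s (hsub hs)).continuousWithinAt).mono hsub)
      (fun s hs => (hxb s (hmem' s hs)).mono_of_mem_nhdsWithin (hmono s hs))
      (fun s _ => Set.mem_univ _)
      (by rw [← hGeq 0, hic.2])
    exact this ⟨ht.1, le_rfl⟩
  -- conclusion
  intro t ht
  refine ⟨?_, ?_, ?_⟩
  · rw [hFeq t]; exact hFub t ht
  · rw [hGeq t]; exact hGxb t ht
  · have hymem : ∀ j : Fin N, t + c j ∈ Set.Icc (0:ℝ) ((N : ℝ) * T) := by
      intro j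
      refine ⟨by linarith [ht.1, hc_nonneg j], ?_⟩
      have := hcN j; linarith [ht.2]
    have : (H1 N T y t).mulVec (α t)
        = ∑ j : Fin N, α t j • (C.mulVec (x (t + c j)) + D.mulVec (u (t + c j))) := by
      rw [H1_mulVec]
      exact Finset.sum_congr rfl fun j _ => by rw [hy (t + c j) (hymem j)]
    rw [this]
    have e1 : (∑ j : Fin N, α t j • (C.mulVec (x (t + c j)) + D.mulVec (u (t + c j))))
        = C.mulVec (G t) + D.mulVec (F t) := by
      rw [← mulVec_sum_smul, ← mulVec_sum_smul, ← Finset.sum_add_distrib]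
      simp [smul_add]
    rw [e1, hFub t ht, hGxb t ht, hyb t ht]
end

section
/- Let A ∈ ℝ^{n×n}, B ∈ ℝ^{n×m}, T > 0, N ∈ ℕ. Let u : [0,NT] → ℝ^m be continuously differentiable on each interval [iT,(i+1)T) (differentiable from the right at the instants iT) and let x : [0,NT] → ℝ^n solve ẋ = A x + B u. Let α : [0,T) → ℝ^N be continuously differentiable and ū : [0,T] → ℝ^m be such that, for all 0 ≤ t < T, H_{1,T}(x_{[0,N−1]}(t)) α̇(t) = 0 and H_{1,T}(u_{[0,N−1]}(t)) α(t) = ū(t). Then x̄(t) := H_{1,T}(x_{[0,N−1]}(t)) α(t) is differentiable on [0,T) and satisfies ẋ̄(t) = A x̄(t) + B ū(t). (This uses the product-rule identity d/dt (H_{1,T}(x_{[0,N−1]}(t)) α(t)) = (A H_{1,T}(x_{[0,N−1]}(t)) + B H_{1,T}(u_{[0,N−1]}(t))) α(t) + H_{1,T}(x_{[0,N−1]}(t)) α̇(t).) -/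
open Set Matrix

/-- **The spanned state signal obeys the system dynamics (proof step of Theorem 2).**
If `H_{1,T}(x(t)) α̇(t) = 0` and `H_{1,T}(u(t)) α(t) = ū(t)` on `[0,T)`, then
`x̄(t) := H_{1,T}(x_{[0,N-1]}(t)) α(t)` is differentiable on `[0,T)` with
`ẋ̄(t) = A x̄(t) + B ū(t)` (via the product rule
`d/dt (H x α) = (A H(x) + B H(u)) α + H(x) α̇`). -/
theorem stmt11 {n m N : ℕ}
    (A : Matrix (Fin n) (Fin n) ℝ) (B : Matrix (Fin n) (Fin m) ℝ)
    (T : ℝ) (hT : 0 < T)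
    (u du : ℝ → Fin m → ℝ) (x : ℝ → Fin n → ℝ)
    (hud : ∀ i : ℕ, i < N →
      (∀ t ∈ Set.Ioo ((i : ℝ) * T) (((i : ℝ) + 1) * T), HasDerivAt u (du t) t) ∧
      HasDerivWithinAt u (du ((i : ℝ) * T)) (Set.Ici ((i : ℝ) * T)) ((i : ℝ) * T) ∧
      ContinuousOn du (Set.Ico ((i : ℝ) * T) (((i : ℝ) + 1) * T)))
    (hx : ∀ t ∈ Set.Icc (0:ℝ) ((N : ℝ) * T),
      HasDerivWithinAt x (A.mulVec (x t) + B.mulVec (u t)) (Set.Icc 0 ((N : ℝ) * T)) t)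
    (ub : ℝ → Fin m → ℝ)
    (α αd : ℝ → Fin N → ℝ)
    (hα : ∀ t ∈ Set.Ico (0:ℝ) T, HasDerivWithinAt α (αd t) (Set.Ico 0 T) t)
    (hαd : ContinuousOn αd (Set.Ico 0 T))
    (hxa : ∀ t ∈ Set.Ico (0:ℝ) T, (H1 N T x t).mulVec (αd t) = 0)
    (hua : ∀ t ∈ Set.Ico (0:ℝ) T, (H1 N T u t).mulVec (α t) = ub t) :
    ∀ t ∈ Set.Ico (0:ℝ) T,
      HasDerivWithinAt (fun s => (H1 N T x s).mulVec (α s))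
        (A.mulVec ((H1 N T x t).mulVec (α t)) + B.mulVec (ub t)) (Set.Ico 0 T) t := by
  intro t ht
  -- shift membership
  have hmem : ∀ (j : Fin N) (s : ℝ), s ∈ Set.Ico (0:ℝ) T →
      s + ((j : ℕ) : ℝ) * T ∈ Set.Icc (0:ℝ) ((N : ℝ) * T) := by
    intro j s hs
    have hj : ((j : ℕ) : ℝ) ≤ (N : ℝ) - 1 := by
      have : (j : ℕ) + 1 ≤ N := j.isLt
      have := Nat.cast_le (α := ℝ).2 this
      push_cast at this ⊢
      linarith
    constructor
    · have : 0 ≤ ((j : ℕ) : ℝ) * T := by positivity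
      linarith [hs.1]
    · nlinarith [hs.2, hs.1, hT]
  -- derivative of shifted x
  have hxs : ∀ j : Fin N, HasDerivWithinAt (fun s => x (s + ((j : ℕ) : ℝ) * T))
      (A.mulVec (x (t + ((j : ℕ) : ℝ) * T)) + B.mulVec (u (t + ((j : ℕ) : ℝ) * T)))
      (Set.Ico 0 T) t := by
    intro j
    have h1 : HasDerivWithinAt (fun s : ℝ => s + ((j : ℕ) : ℝ) * T) 1 (Set.Ico 0 T) t :=
      (hasDerivAt_id t).add_const _ |>.hasDerivWithinAt
    have h2 := hx _ (hmem j t ht)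
    have := HasDerivWithinAt.scomp t h2 h1 (fun s hs => hmem j s hs)
    simpa [Function.comp_def] using this
  -- component derivative of α
  have hαc : ∀ j : Fin N, HasDerivWithinAt (fun s => α s j) (αd t j) (Set.Ico 0 T) t :=
    fun j => hasDerivWithinAt_pi.1 (hα t ht) j
  -- sum form
  have hsum : HasDerivWithinAt (fun s => ∑ j : Fin N, α s j • x (s + ((j : ℕ) : ℝ) * T))
      (∑ j : Fin N, (α t j • (A.mulVec (x (t + ((j : ℕ) : ℝ) * T)) + B.mulVec (u (t + ((j : ℕ) : ℝ) * T))) +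
        αd t j • x (t + ((j : ℕ) : ℝ) * T)))
      (Set.Ico 0 T) t := by
    apply HasDerivWithinAt.fun_sum
    intro j _
    exact (hαc j).smul (hxs j)
  have key : (∑ j : Fin N, (α t j • (A.mulVec (x (t + ((j : ℕ) : ℝ) * T)) + B.mulVec (u (t + ((j : ℕ) : ℝ) * T))) +
        αd t j • x (t + ((j : ℕ) : ℝ) * T)))
      = A.mulVec ((H1 N T x t).mulVec (α t)) + B.mulVec (ub t) := by
    rw [Finset.sum_add_distrib]
    have h0 : (∑ j : Fin N, αd t j • x (t + ((j : ℕ) : ℝ) * T)) = 0 := by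
      rw [← H1_mulVec]; exact hxa t ht
    rw [h0, add_zero]
    have : (∑ j : Fin N, α t j • (A.mulVec (x (t + ((j : ℕ) : ℝ) * T)) +
        B.mulVec (u (t + ((j : ℕ) : ℝ) * T))))
        = A.mulVec (∑ j : Fin N, α t j • x (t + ((j : ℕ) : ℝ) * T)) +
          B.mulVec (∑ j : Fin N, α t j • u (t + ((j : ℕ) : ℝ) * T)) := by
      simp only [← Matrix.mulVecLin_apply, smul_add, Finset.sum_add_distrib, map_sum, _root_.map_smul]
    rw [this, ← H1_mulVec, ← H1_mulVec, hua t ht]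
  rw [← key]
  have heq : (fun s => (H1 N T x s).mulVec (α s))
      = fun s => ∑ j : Fin N, α s j • x (s + ((j : ℕ) : ℝ) * T) := by
    funext s; exact H1_mulVec T x s (α s)
  rw [heq]
  exact hsum
end

section
/- Let A ∈ ℝ^{n×n}, B ∈ ℝ^{n×m}, T > 0, N ∈ ℕ. Let u : [0,NT] → ℝ^m be continuously differentiable on each interval [iT,(i+1)T) (differentiable from the right at the instants iT), let x : [0,NT] → ℝ^n solve ẋ = A x + B u, and let ū : [0,T] → ℝ^m be continuous. Let α : [0,T) → ℝ^N be continuously differentiable with H_{1,T}(x_{[0,N−1]}(t)) α̇(t) = 0 and H_{1,T}(u_{[0,N−1]}(t)) α(t) = ū(t) for all 0 ≤ t < T. If x̄ : [0,T) → ℝ^n is differentiable with ẋ̄(t) = A x̄(t) + B ū(t) and x̄(0) = H_{1,T}(x_{[0,N−1]}(0)) α(0), then x̄(t) = H_{1,T}(x_{[0,N−1]}(t)) α(t) for all 0 ≤ t < T. -/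
open Set Matrix

lemma H1_mulVec_eq_sum {σ N : ℕ} (T : ℝ) (z : ℝ → Fin σ → ℝ) (s : ℝ) (v : Fin N → ℝ) :
    (H1 N T z s).mulVec v = ∑ j : Fin N, v j • z (s + ((j : ℕ) : ℝ) * T) := by
  funext a
  simp [H1, Matrix.mulVec, dotProduct, Finset.sum_apply, mul_comm]

/-- **Uniqueness: the spanned state equals the true state (proof step of Theorem 2).**
If `H_{1,T}(x(t)) α̇(t) = 0` and `H_{1,T}(u(t)) α(t) = ū(t)` on `[0,T)`, and `x̄` solves
`ẋ̄ = A x̄ + B ū` with `x̄(0) = H_{1,T}(x(0)) α(0)`, then `x̄(t) = H_{1,T}(x(t)) α(t)`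
for all `0 ≤ t < T`. -/
theorem stmt13 {n m N : ℕ}
    (A : Matrix (Fin n) (Fin n) ℝ) (B : Matrix (Fin n) (Fin m) ℝ)
    (T : ℝ) (hT : 0 < T)
    (u du : ℝ → Fin m → ℝ) (x : ℝ → Fin n → ℝ)
    (hud : ∀ i : ℕ, i < N →
      (∀ t ∈ Set.Ioo ((i : ℝ) * T) (((i : ℝ) + 1) * T), HasDerivAt u (du t) t) ∧
      HasDerivWithinAt u (du ((i : ℝ) * T)) (Set.Ici ((i : ℝ) * T)) ((i : ℝ) * T) ∧
      ContinuousOn du (Set.Ico ((i : ℝ) * T) (((i : ℝ) + 1) * T)))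
    (hx : ∀ t ∈ Set.Icc (0:ℝ) ((N : ℝ) * T),
      HasDerivWithinAt x (A.mulVec (x t) + B.mulVec (u t)) (Set.Icc 0 ((N : ℝ) * T)) t)
    (ub : ℝ → Fin m → ℝ) (hubc : ContinuousOn ub (Set.Icc 0 T))
    (α αd : ℝ → Fin N → ℝ)
    (hα : ∀ t ∈ Set.Ico (0:ℝ) T, HasDerivWithinAt α (αd t) (Set.Ico 0 T) t)
    (hαd : ContinuousOn αd (Set.Ico 0 T))
    (hxa : ∀ t ∈ Set.Ico (0:ℝ) T, (H1 N T x t).mulVec (αd t) = 0)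
    (hua : ∀ t ∈ Set.Ico (0:ℝ) T, (H1 N T u t).mulVec (α t) = ub t)
    (xb : ℝ → Fin n → ℝ)
    (hxb : ∀ t ∈ Set.Ico (0:ℝ) T,
      HasDerivWithinAt xb (A.mulVec (xb t) + B.mulVec (ub t)) (Set.Ico 0 T) t)
    (hxb0 : xb 0 = (H1 N T x 0).mulVec (α 0)) :
    ∀ t ∈ Set.Ico (0:ℝ) T, xb t = (H1 N T x t).mulVec (α t) := by
  classical
  set y : ℝ → Fin n → ℝ := fun s => (H1 N T x s).mulVec (α s) with hy
  -- derivative of y on Ico 0 T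
  have hyd : ∀ t ∈ Set.Ico (0:ℝ) T,
      HasDerivWithinAt y (A.mulVec (y t) + B.mulVec (ub t)) (Set.Ico 0 T) t := by
    intro t ht
    have hterm : ∀ j : Fin N,
        HasDerivWithinAt (fun s => α s j • x (s + ((j : ℕ) : ℝ) * T))
          (α t j • (A.mulVec (x (t + ((j : ℕ) : ℝ) * T)) +
              B.mulVec (u (t + ((j : ℕ) : ℝ) * T))) +
            αd t j • x (t + ((j : ℕ) : ℝ) * T))
          (Set.Ico 0 T) t := by
      intro j
      have hjT : (0:ℝ) ≤ ((j : ℕ) : ℝ) * T :=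
        mul_nonneg (Nat.cast_nonneg _) hT.le
      have hmem : t + ((j : ℕ) : ℝ) * T ∈ Set.Icc (0:ℝ) ((N : ℝ) * T) := by
        constructor
        · linarith [ht.1]
        · have hj1 : ((j : ℕ) : ℝ) + 1 ≤ (N : ℝ) := by
            exact_mod_cast Nat.succ_le_of_lt j.isLt
          nlinarith [ht.2, hT]
      have hmaps : Set.MapsTo (fun s => s + ((j : ℕ) : ℝ) * T)
          (Set.Ico 0 T) (Set.Icc 0 ((N : ℝ) * T)) := by
        intro s hs
        have hj1 : ((j : ℕ) : ℝ) + 1 ≤ (N : ℝ) := by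
          exact_mod_cast Nat.succ_le_of_lt j.isLt
        have h1 : (0:ℝ) ≤ s + ((j : ℕ) : ℝ) * T := by linarith [hs.1]
        have h2 : s + ((j : ℕ) : ℝ) * T ≤ (N : ℝ) * T := by nlinarith [hs.2, hT]
        exact ⟨h1, h2⟩
      have hxj : HasDerivWithinAt (fun s => x (s + ((j : ℕ) : ℝ) * T))
          (A.mulVec (x (t + ((j : ℕ) : ℝ) * T)) +
            B.mulVec (u (t + ((j : ℕ) : ℝ) * T))) (Set.Ico 0 T) t := by
        have hinner : HasDerivWithinAt (fun s : ℝ => s + ((j : ℕ) : ℝ) * T)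
            1 (Set.Ico 0 T) t := (hasDerivWithinAt_id t _).add_const _
        have := (hx _ hmem).scomp_of_eq t hinner hmaps rfl
        rw [one_smul] at this
        exact this
      have hαj : HasDerivWithinAt (fun s => α s j) (αd t j) (Set.Ico 0 T) t :=
        hasDerivWithinAt_pi.1 (hα t ht) j
      exact hαj.smul hxj
    have hs := HasDerivWithinAt.fun_sum (u := Finset.univ) (fun j _ => hterm j)
    have hfun : (fun s => ∑ j : Fin N, α s j • x (s + ((j : ℕ) : ℝ) * T)) = y := by
      funext s
      exact (H1_mulVec_eq_sum T x s (α s)).symm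
    rw [hfun] at hs
    have hsum_eq : (∑ j : Fin N,
        (α t j • (A.mulVec (x (t + ((j : ℕ) : ℝ) * T)) +
            B.mulVec (u (t + ((j : ℕ) : ℝ) * T))) +
          αd t j • x (t + ((j : ℕ) : ℝ) * T)))
        = A.mulVec (y t) + B.mulVec (ub t) := by
      rw [← hua t ht]
      have h1 : y t = ∑ j : Fin N, α t j • x (t + ((j : ℕ) : ℝ) * T) :=
        H1_mulVec_eq_sum T x t (α t)
      have h2 : (H1 N T u t).mulVec (α t)
          = ∑ j : Fin N, α t j • u (t + ((j : ℕ) : ℝ) * T) :=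
        H1_mulVec_eq_sum T u t (α t)
      have h3 : (H1 N T x t).mulVec (αd t)
          = ∑ j : Fin N, αd t j • x (t + ((j : ℕ) : ℝ) * T) :=
        H1_mulVec_eq_sum T x t (αd t)
      have h4 := hxa t ht
      rw [h3] at h4
      calc (∑ j : Fin N,
          (α t j • (A.mulVec (x (t + ((j : ℕ) : ℝ) * T)) +
              B.mulVec (u (t + ((j : ℕ) : ℝ) * T))) +
            αd t j • x (t + ((j : ℕ) : ℝ) * T)))
          = (∑ j : Fin N, α t j • A.mulVec (x (t + ((j : ℕ) : ℝ) * T)))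
            + (∑ j : Fin N, α t j • B.mulVec (u (t + ((j : ℕ) : ℝ) * T)))
            + (∑ j : Fin N, αd t j • x (t + ((j : ℕ) : ℝ) * T)) := by
            simp [Finset.sum_add_distrib, smul_add, add_assoc]
        _ = A.mulVec (y t) + B.mulVec ((H1 N T u t).mulVec (α t)) := by
            rw [h4, add_zero, h1, h2]
            congr 1
            · have hm := map_sum A.mulVecLin
                (fun j : Fin N => α t j • x (t + ((j : ℕ) : ℝ) * T)) Finset.univ
              simp only [_root_.map_smul, Matrix.mulVecLin_apply] at hm
              exact hm.symm
            · have hm := map_sum B.mulVecLin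
                (fun j : Fin N => α t j • u (t + ((j : ℕ) : ℝ) * T)) Finset.univ
              simp only [_root_.map_smul, Matrix.mulVecLin_apply] at hm
              exact hm.symm
    rw [hsum_eq] at hs
    exact hs
  -- uniqueness via Gronwall
  intro t ht
  set f : ℝ → Fin n → ℝ := fun s => xb s - y s with hf
  let L : (Fin n → ℝ) →L[ℝ] (Fin n → ℝ) := LinearMap.toContinuousLinearMap A.mulVecLin
  have hv : ∀ s : ℝ, LipschitzWith ‖L‖₊ (fun w => A.mulVec w) := by
    intro s
    have := L.lipschitz
    exact this
  have hIcoSub : Set.Icc (0:ℝ) t ⊆ Set.Ico 0 T := fun s hs =>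
    ⟨hs.1, lt_of_le_of_lt hs.2 ht.2⟩
  have hfd : ∀ s ∈ Set.Ico (0:ℝ) t,
      HasDerivWithinAt f (A.mulVec (f s)) (Set.Ici s) s := by
    intro s hs
    have hs' : s ∈ Set.Ico (0:ℝ) T := ⟨hs.1, lt_trans hs.2 ht.2⟩
    have hd := (hxb s hs').sub (hyd s hs')
    have hmem : Set.Ico (0:ℝ) T ∈ nhdsWithin s (Set.Ici s) := by
      apply mem_nhdsWithin.2
      exact ⟨Set.Iio T, isOpen_Iio, hs'.2, fun r hr => ⟨le_trans hs.1 hr.2, hr.1⟩⟩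
    have hd2 := hd.mono_of_mem_nhdsWithin hmem
    have : A.mulVec (xb s) + B.mulVec (ub s) - (A.mulVec (y s) + B.mulVec (ub s))
        = A.mulVec (f s) := by
      rw [hf]
      simp only [Matrix.mulVec_sub]
      abel
    rwa [this] at hd2
  have hfc : ContinuousOn f (Set.Icc 0 t) := by
    intro s hs
    have hs' := hIcoSub hs
    exact (((hxb s hs').sub (hyd s hs')).continuousWithinAt).mono hIcoSub
  have hgd : ∀ s ∈ Set.Ico (0:ℝ) t,
      HasDerivWithinAt (fun _ : ℝ => (0 : Fin n → ℝ))
        (A.mulVec ((fun _ : ℝ => (0 : Fin n → ℝ)) s)) (Set.Ici s) s := by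
    intro s hs
    simpa [Matrix.mulVec_zero] using
      (hasDerivWithinAt_const s (Set.Ici s) (0 : Fin n → ℝ))
  have hgc : ContinuousOn (fun _ : ℝ => (0 : Fin n → ℝ)) (Set.Icc 0 t) :=
    continuousOn_const
  have h0 : f 0 = 0 := by
    rw [hf]; simp [hxb0, hy]
  have := ODE_solution_unique (v := fun _ w => A.mulVec w) hv hfc hfd hgc hgd h0
    (Set.right_mem_Icc.2 ht.1)
  have hft : f t = 0 := this
  have := sub_eq_zero.mp hft
  simpa [hy] using this
end

section
/- Consider the system ẋ(t) = A x(t) + B u(t), y(t) = C x(t) + D u(t) with A ∈ ℝ^{n×n}, B ∈ ℝ^{n×m}, C ∈ ℝ^{p×n}, D ∈ ℝ^{p×m}. Let T > 0, N ∈ ℕ, let u : [0,NT] → ℝ^m be continuously differentiable for all t ∈ [0,NT] with t ≠ iT (i = 1,…,N−1) and continuously differentiable from the right at the instants t = iT, let x : [0,NT] → ℝ^n solve ẋ = A x + B u, let y = C x + D u, and assume the data (u,x) is persistently excited of order n+1. Let 0 = T_0 < T_1 < ⋯ < T_M < T_{M+1} = T be given instants. Then signals ū : [0,T] → ℝ^m,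 ȳ : [0,T] → ℝ^p, with ū continuously differentiable for all t ≠ T_j and continuously differentiable from the right at each T_j, are an input-output trajectory of the system corresponding to some initial condition x̄(0) (i.e., there exists continuous x̄ : [0,T) → ℝ^n, differentiable for t ≠ T_j, with ẋ̄ = A x̄ + B ū and ȳ = C x̄ + D ū) if and only if there exists α : [0,T) → ℝ^N, continuously differentiable on each interval [T_j, T_{j+1}), such that on each interval T_j ≤ t < T_{j+1} the equations H_{1,T}(u_{[0,N−1]}(t)) α̇(t) = −H_{1,T}(u̇_{[0,N−1]}(t)) α(t) + ū̇(t), H_{1,T}(x_{[0,N−1]}(t)) α̇(t) = 0, H_{1,T}(u_{[0,N−1]}(t)) α(t) = ū(t) and H_{1,T}(y_{[0,N−1]}(t)) α(t) = ȳ(t) hold, the initial-condition constraint H_{1,T}(u_{[0,N−1]}(0)) α(0) = ū(0), H_{1,T}(x_{[0,N−1]}(0)) α(0) = x̄(0) holds, and at each junction instant T_j (j = 1,…,M): H_{1,T}(u_{[0,N−1]}(T_j)) α(T_j) = ū(T_j) and H_{1,T}(x_{[0,N−1]}(T_j)) α(T_j) = lim_{ε→0⁺} H_{1,T}(x_{[0,N−1]}(T_j−ε))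 α(T_j−ε). -/
open Set Matrix Filter Topology

section Aux

variable {K : Type*} [Fintype K] [DecidableEq K]

lemma contDiff_coord {ι κ : Type*} [Fintype ι] [Fintype κ] (a : ι) (b : κ) :
    ContDiff ℝ 2 (fun q : ι → κ → ℝ => q a b) :=
  ((ContinuousLinearMap.proj (R := ℝ) (φ := fun _ : κ => ℝ) b).comp
    (ContinuousLinearMap.proj (R := ℝ) (φ := fun _ : ι => κ → ℝ) a)).contDiff

lemma contDiff_det' : ContDiff ℝ 2 (fun q : K → K → ℝ => (Matrix.of q).det) := by
  simp only [Matrix.det_apply']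
  refine ContDiff.sum fun σ _ => contDiff_const.mul ?_
  refine contDiff_prod fun c _ => ?_
  simpa using contDiff_coord (σ c) c

lemma contDiff_adj (i j : K) :
    ContDiff ℝ 2 (fun q : K → K → ℝ => (Matrix.of q).adjugate i j) := by
  simp only [Matrix.adjugate_apply, Matrix.det_apply']
  refine ContDiff.sum fun σ _ => contDiff_const.mul ?_
  refine contDiff_prod fun c _ => ?_
  simp only [Matrix.updateRow_apply]
  split_ifs
  · exact contDiff_const
  · simpa using contDiff_coord (σ c) c

noncomputable def Sinv (q : K → K → ℝ) : K → K → ℝ :=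
  fun i j => ((Matrix.of q).det)⁻¹ * (Matrix.of q).adjugate i j

lemma of_Sinv_eq (q : K → K → ℝ) : Matrix.of (Sinv q) = (Matrix.of q)⁻¹ := by
  ext i j
  rw [Matrix.inv_def]
  simp [Sinv, Ring.inverse_eq_inv, smul_eq_mul]

lemma contDiffAt_Sinv {q0 : K → K → ℝ} (h : (Matrix.of q0).det ≠ 0) :
    ContDiffAt ℝ 2 (Sinv (K := K)) q0 := by
  refine contDiffAt_pi.2 fun i => contDiffAt_pi.2 fun j => ?_
  exact (contDiff_det'.contDiffAt.inv h).mul (contDiff_adj i j).contDiffAt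

def Mprod {N : ℕ} (g : K → Fin N → ℝ) : K → K → ℝ := fun a b => ∑ c, g a c * g b c

lemma of_Mprod_eq {N : ℕ} (g : K → Fin N → ℝ) :
    Matrix.of (Mprod g) = Matrix.of g * (Matrix.of g)ᵀ := by
  ext a b
  simp [Mprod, Matrix.mul_apply]

lemma contDiff_Mprod {N : ℕ} : ContDiff ℝ 2 (Mprod (K := K) (N := N)) := by
  refine contDiff_pi.2 fun a => contDiff_pi.2 fun b => ?_
  exact ContDiff.sum fun c _ => (contDiff_coord a c).mul (contDiff_coord b c)

noncomputable def Phi {N : ℕ} (gv : (K → Fin N → ℝ) × (K → ℝ)) : Fin N → ℝ :=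
  fun i => ∑ r, gv.1 r i * (∑ r', Sinv (Mprod gv.1) r r' * gv.2 r')

lemma contDiffAt_Phi {N : ℕ} {gv0 : (K → Fin N → ℝ) × (K → ℝ)}
    (h : (Matrix.of (Mprod gv0.1)).det ≠ 0) : ContDiffAt ℝ 2 (Phi (K := K) (N := N)) gv0 := by
  refine contDiffAt_pi.2 fun i => ?_
  refine ContDiffAt.sum fun r _ => ContDiffAt.mul ?_ ?_
  · exact ((contDiff_coord r i).comp contDiff_fst).contDiffAt
  · refine ContDiffAt.sum fun r' _ => ContDiffAt.mul ?_ ?_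
    · have h1 : ContDiffAt ℝ 2 (fun gv : (K → Fin N → ℝ) × (K → ℝ) => Mprod gv.1) gv0 :=
        (contDiff_Mprod.comp contDiff_fst).contDiffAt
      have h2 : ContDiffAt ℝ 2 (Sinv (K := K)) (Mprod gv0.1) := contDiffAt_Sinv h
      exact ContDiffAt.comp (x := gv0) (ContDiffAt.comp (x := Mprod gv0.1)
        (contDiff_coord r r').contDiffAt h2) h1
    · exact (((contDiff_apply ℝ ℝ r').comp contDiff_snd)).contDiffAt

lemma Phi_eq {N : ℕ} (g : K → Fin N → ℝ) (v : K → ℝ) :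
    Phi (g, v) = (Matrix.of g)ᵀ.mulVec
      ((Matrix.of g * (Matrix.of g)ᵀ)⁻¹.mulVec v) := by
  funext i
  rw [← of_Mprod_eq, ← of_Sinv_eq]
  simp [Phi, Matrix.mulVec, dotProduct]

lemma isUnit_of_rank_eq_card_s14 (Q : Matrix K K ℝ) (h : Q.rank = Fintype.card K) : IsUnit Q := by
  refine Matrix.mulVec_surjective_iff_isUnit.1 ?_
  have hr : LinearMap.range Q.mulVecLin = ⊤ := by
    apply Submodule.eq_top_of_finrank_eq
    rw [← Matrix.rank, h]
    simp [Module.finrank_fintype_fun_eq_card]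
  intro w
  obtain ⟨v, hv⟩ := LinearMap.range_eq_top.1 hr w
  exact ⟨v, hv⟩

lemma mulVec_Phi {N : ℕ} {g : K → Fin N → ℝ} {v : K → ℝ}
    (h : IsUnit (Matrix.of g * (Matrix.of g)ᵀ)) :
    (Matrix.of g).mulVec (Phi (g, v)) = v := by
  rw [Phi_eq, Matrix.mulVec_mulVec, Matrix.mulVec_mulVec,
    Matrix.mul_nonsing_inv _ ((Matrix.isUnit_iff_isUnit_det _).1 h), Matrix.one_mulVec]

end Aux

section Curve

variable {K : Type*} [Fintype K] [DecidableEq K] {N : ℕ}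

lemma hasDerivWithinAt_Phi_comp {g : ℝ → K → Fin N → ℝ} {v : ℝ → K → ℝ}
    {g' : K → Fin N → ℝ} {v' : K → ℝ} {s : Set ℝ} {t : ℝ}
    (hg : HasDerivWithinAt g g' s t) (hv : HasDerivWithinAt v v' s t)
    (h : (Matrix.of (Mprod (g t))).det ≠ 0) :
    HasDerivWithinAt (fun τ => Phi (g τ, v τ))
      (fderiv ℝ Phi ((g t, v t)) (g', v')) s t := by
  have hd : HasFDerivAt Phi (fderiv ℝ Phi (g t, v t)) (g t, v t) :=
    ((contDiffAt_Phi h).differentiableAt (by norm_num)).hasFDerivAt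
  exact hd.comp_hasDerivWithinAt t (hg.prodMk hv)

lemma continuousWithinAt_Phi_deriv {g : ℝ → K → Fin N → ℝ} {v : ℝ → K → ℝ}
    {g' : ℝ → K → Fin N → ℝ} {v' : ℝ → K → ℝ} {s : Set ℝ} {t : ℝ}
    (hg : ContinuousWithinAt g s t) (hv : ContinuousWithinAt v s t)
    (hg' : ContinuousWithinAt g' s t) (hv' : ContinuousWithinAt v' s t)
    (h : (Matrix.of (Mprod (g t))).det ≠ 0) :
    ContinuousWithinAt (fun τ => fderiv ℝ Phi (g τ, v τ) (g' τ, v' τ)) s t := by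
  have h1 : ContDiffAt ℝ 1 (fderiv ℝ (Phi (K := K) (N := N))) (g t, v t) :=
    (contDiffAt_Phi h).fderiv_right (by norm_num)
  have h2 : ContinuousWithinAt (fun τ => fderiv ℝ Phi ((g τ, v τ))) s t :=
    ContinuousAt.comp_continuousWithinAt h1.continuousAt (hg.prodMk hv)
  exact (isBoundedBilinearMap_apply.continuous.continuousAt).comp_continuousWithinAt
    (h2.prodMk (hg'.prodMk hv'))

end Curve

section H1sec

variable {σ N : ℕ} {T : ℝ}

lemma H1_mulVec_apply (z : ℝ → Fin σ → ℝ) (w : Fin N → ℝ) (t : ℝ) (a : Fin σ) :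
    (H1 N T z t).mulVec w a = ∑ c : Fin N, z (t + (c : ℝ) * T) a * w c := by
  simp [H1, Matrix.mulVec, dotProduct]

lemma hasDerivWithinAt_H1_mulVec {z dz : ℝ → Fin σ → ℝ} {α : ℝ → Fin N → ℝ} {αd : Fin N → ℝ}
    {s : Set ℝ} {t : ℝ}
    (hz : ∀ c : Fin N, HasDerivWithinAt (fun τ => z (τ + (c : ℝ) * T)) (dz (t + (c : ℝ) * T)) s t)
    (hα : HasDerivWithinAt α αd s t) :
    HasDerivWithinAt (fun τ => (H1 N T z τ).mulVec (α τ))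
      ((H1 N T dz t).mulVec (α t) + (H1 N T z t).mulVec αd) s t := by
  refine hasDerivWithinAt_pi.2 fun a => ?_
  have key : ∀ c : Fin N, HasDerivWithinAt (fun τ => z (τ + (c : ℝ) * T) a * α τ c)
      (dz (t + (c : ℝ) * T) a * α t c + z (t + (c : ℝ) * T) a * αd c) s t := fun c =>
    ((hasDerivWithinAt_pi.1 (hz c)) a).mul ((hasDerivWithinAt_pi.1 hα) c)
  have hsum := HasDerivWithinAt.sum (fun c (_ : c ∈ Finset.univ) => key c)
  have heq : (fun τ => (H1 N T z τ).mulVec (α τ) a) = fun τ => ∑ c : Fin N, z (τ + (c:ℝ)*T) a * α τ c := by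
    funext τ; exact H1_mulVec_apply z (α τ) τ a
  have hval : (H1 N T dz t *ᵥ α t + H1 N T z t *ᵥ αd) a
      = ∑ c : Fin N, (dz (t + (c:ℝ)*T) a * α t c + z (t + (c:ℝ)*T) a * αd c) := by
    simp [H1_mulVec_apply, Finset.sum_add_distrib]
  rw [show (fun τ => (H1 N T z τ *ᵥ α τ) a) = fun τ => ∑ c : Fin N, z (τ + (c:ℝ)*T) a * α τ c from heq, hval]
  exact HasDerivWithinAt.fun_sum (fun c (_ : c ∈ Finset.univ) => key c)

lemma H1_comb {σ1 σ2 : ℕ} (C : Matrix (Fin σ) (Fin σ1) ℝ) (D : Matrix (Fin σ) (Fin σ2) ℝ)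
    {z1 : ℝ → Fin σ1 → ℝ} {z2 : ℝ → Fin σ2 → ℝ} {f : ℝ → Fin σ → ℝ} {t : ℝ}
    (hf : ∀ c : Fin N, f (t + (c : ℝ) * T) =
      C.mulVec (z1 (t + (c : ℝ) * T)) + D.mulVec (z2 (t + (c : ℝ) * T))) :
    H1 N T f t = C * H1 N T z1 t + D * H1 N T z2 t := by
  ext a j
  rw [Matrix.add_apply, Matrix.mul_apply, Matrix.mul_apply]
  show f (t + (j : ℝ) * T) a = _
  rw [hf j]
  simp [H1, Matrix.mulVec, dotProduct]

lemma comb_mulVec {σ1 σ2 : ℕ} (C : Matrix (Fin σ) (Fin σ1) ℝ) (D : Matrix (Fin σ) (Fin σ2) ℝ)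
    (P : Matrix (Fin σ1) (Fin N) ℝ) (Q : Matrix (Fin σ2) (Fin N) ℝ) (w : Fin N → ℝ) :
    (C * P + D * Q).mulVec w = C.mulVec (P.mulVec w) + D.mulVec (Q.mulVec w) := by
  rw [Matrix.add_mulVec, Matrix.mulVec_mulVec, Matrix.mulVec_mulVec]

end H1sec
set_option maxHeartbeats 2000000

/-- **Willems' lemma for continuous-time systems with piecewise differentiable inputs
(Corollary 1).**  With persistently excited data `(u,x,y)` of order `n+1` and a partition
`0 = T_0 < T_1 < ⋯ < T_M < T_{M+1} = T`, signals `(ū, ȳ)` with `ū` piecewise continuously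
differentiable (from the right at each `T_j`) are an input-output trajectory corresponding
to the initial condition `x̄₀` if and only if there exists a piecewise continuously
differentiable `α` satisfying equations (6), (7), (8) on each interval `[T_j, T_{j+1})`
together with the junction conditions (9). -/
theorem stmt14 {n m p N : ℕ}
    (A : Matrix (Fin n) (Fin n) ℝ) (B : Matrix (Fin n) (Fin m) ℝ)
    (C : Matrix (Fin p) (Fin n) ℝ) (D : Matrix (Fin p) (Fin m) ℝ)
    (T : ℝ) (hT : 0 < T)
    (u du : ℝ → Fin m → ℝ) (x : ℝ → Fin n → ℝ) (y : ℝ → Fin p → ℝ)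
    (hud : ∀ i : ℕ, i < N →
      (∀ t ∈ Set.Ioo ((i : ℝ) * T) (((i : ℝ) + 1) * T), HasDerivAt u (du t) t) ∧
      HasDerivWithinAt u (du ((i : ℝ) * T)) (Set.Ici ((i : ℝ) * T)) ((i : ℝ) * T) ∧
      ContinuousOn du (Set.Ico ((i : ℝ) * T) (((i : ℝ) + 1) * T)))
    (hx : ∀ t ∈ Set.Icc (0:ℝ) ((N : ℝ) * T),
      HasDerivWithinAt x (A.mulVec (x t) + B.mulVec (u t)) (Set.Icc 0 ((N : ℝ) * T)) t)
    (hy : ∀ t ∈ Set.Icc (0:ℝ) ((N : ℝ) * T), y t = C.mulVec (x t) + D.mulVec (u t))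
    (hpe : ∀ t ∈ Set.Ico (0:ℝ) T,
      (Matrix.fromRows (H1 N T u t) (H1 N T x t)).rank = m + n)
    (M : ℕ) (Tp : ℕ → ℝ)
    (hTp0 : Tp 0 = 0) (hTpM : Tp (M + 1) = T)
    (hTpmono : ∀ j : ℕ, j ≤ M → Tp j < Tp (j + 1))
    (ub dub : ℝ → Fin m → ℝ) (yb : ℝ → Fin p → ℝ)
    (hub : ∀ j : ℕ, j ≤ M →
      (∀ t ∈ Set.Ioo (Tp j) (Tp (j + 1)), HasDerivAt ub (dub t) t) ∧
      HasDerivWithinAt ub (dub (Tp j)) (Set.Ici (Tp j)) (Tp j) ∧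
      ContinuousOn dub (Set.Ico (Tp j) (Tp (j + 1))))
    (xb0 : Fin n → ℝ) :
    (∃ xb : ℝ → Fin n → ℝ, xb 0 = xb0 ∧
      ContinuousOn xb (Set.Ico 0 T) ∧
      (∀ j : ℕ, j ≤ M → ∀ t ∈ Set.Ioo (Tp j) (Tp (j + 1)),
        HasDerivAt xb (A.mulVec (xb t) + B.mulVec (ub t)) t) ∧
      (∀ t ∈ Set.Ico (0:ℝ) T, yb t = C.mulVec (xb t) + D.mulVec (ub t))) ↔
    (∃ α αd : ℝ → Fin N → ℝ,
      (∀ j : ℕ, j ≤ M →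
        (∀ t ∈ Set.Ico (Tp j) (Tp (j + 1)),
          HasDerivWithinAt α (αd t) (Set.Ico (Tp j) (Tp (j + 1))) t) ∧
        ContinuousOn αd (Set.Ico (Tp j) (Tp (j + 1)))) ∧
      (∀ j : ℕ, j ≤ M → ∀ t ∈ Set.Ico (Tp j) (Tp (j + 1)),
        (H1 N T u t).mulVec (αd t) = -((H1 N T du t).mulVec (α t)) + dub t ∧
        (H1 N T x t).mulVec (αd t) = 0 ∧
        (H1 N T u t).mulVec (α t) = ub t ∧
        (H1 N T y t).mulVec (α t) = yb t) ∧
      (H1 N T u 0).mulVec (α 0) = ub 0 ∧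
      (H1 N T x 0).mulVec (α 0) = xb0 ∧
      (∀ j : ℕ, 1 ≤ j → j ≤ M →
        (H1 N T u (Tp j)).mulVec (α (Tp j)) = ub (Tp j) ∧
        Filter.Tendsto (fun s => (H1 N T x s).mulVec (α s))
          (nhdsWithin (Tp j) (Set.Iio (Tp j)))
          (nhds ((H1 N T x (Tp j)).mulVec (α (Tp j)))))) := by
  classical
  -- partition facts
  have hTpmono' : ∀ i j : ℕ, i ≤ j → j ≤ M + 1 → Tp i ≤ Tp j := by
    intro i j
    induction j with
    | zero => intro h _; rw [Nat.le_zero.mp h]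
    | succ k ih =>
      intro hij hk
      rcases Nat.lt_or_ge i (k+1) with h | h
      · exact le_trans (ih (by omega) (by omega)) (hTpmono k (by omega)).le
      · have : i = k + 1 := by omega
        simp [this]
  have hTp_nonneg : ∀ j : ℕ, j ≤ M + 1 → 0 ≤ Tp j := by
    intro j hj; simpa [hTp0] using hTpmono' 0 j (by omega) hj
  have hTp_le : ∀ j : ℕ, j ≤ M + 1 → Tp j ≤ T := by
    intro j hj; simpa [hTpM] using hTpmono' j (M+1) hj le_rfl
  have hpiece : ∀ j : ℕ, j ≤ M → Set.Ico (Tp j) (Tp (j+1)) ⊆ Set.Ico (0:ℝ) T := by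
    intro j hj t ht
    exact ⟨le_trans (hTp_nonneg j (by omega)) ht.1,
      lt_of_lt_of_le ht.2 (hTp_le (j+1) (by omega))⟩
  have hcover : ∀ t ∈ Set.Ico (0:ℝ) T, ∃ j, j ≤ M ∧ t ∈ Set.Ico (Tp j) (Tp (j+1)) := by
    intro t ht
    set P : ℕ → Prop := fun j => Tp j ≤ t with hP
    have hP0 : P 0 := by simp [hP, hTp0, ht.1]
    set j := Nat.findGreatest P M with hj
    have hjM : j ≤ M := Nat.findGreatest_le M
    have hPj : P j := Nat.findGreatest_spec (Nat.zero_le M) hP0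
    refine ⟨j, hjM, hPj, ?_⟩
    rcases Nat.lt_or_ge j M with h | h
    · by_contra hc
      push_neg at hc
      have hlt : Nat.findGreatest P M < j + 1 := by rw [← hj]; omega
      exact (Nat.findGreatest_is_greatest hlt (by omega)) hc
    · have : j = M := by omega
      rw [this, hTpM]; exact ht.2
  -- shift facts
  have hs1 : ∀ t ∈ Set.Ico (0:ℝ) T, ∀ c : Fin N,
      t + (c : ℝ) * T ∈ Set.Icc (0:ℝ) ((N : ℝ) * T) := by
    intro t ht c
    have hcN : (c : ℝ) + 1 ≤ (N : ℝ) := by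
      have := c.isLt; exact_mod_cast Nat.succ_le_of_lt this
    constructor
    · have : (0:ℝ) ≤ (c : ℝ) * T := by positivity
      linarith [ht.1]
    · nlinarith [ht.2, ht.1, hT]
  -- derivative facts for shifted data signals
  have hu1 : ∀ t ∈ Set.Ico (0:ℝ) T, ∀ c : Fin N,
      HasDerivWithinAt (fun τ => u (τ + (c : ℝ) * T)) (du (t + (c : ℝ) * T))
        (Set.Ico (0:ℝ) T) t := by
    intro t ht c
    have hc := hud c c.isLt
    rcases eq_or_lt_of_le ht.1 with h0 | h0
    · subst h0
      have hshift : HasDerivWithinAt (fun τ : ℝ => τ + (c : ℝ) * T) 1 (Set.Ici (0:ℝ)) 0 :=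
        ((hasDerivAt_id (0:ℝ)).add_const _).hasDerivWithinAt
      have hmaps : Set.MapsTo (fun τ : ℝ => τ + (c : ℝ) * T)
          (Set.Ici (0:ℝ)) (Set.Ici ((c : ℝ) * T)) := by
        intro τ hτ
        simp only [Set.mem_Ici] at hτ ⊢
        linarith
      have := hc.2.1.scomp_of_eq (0:ℝ) hshift hmaps (by ring)
      have h2 := this.mono (Set.Ico_subset_Ici_self : Set.Ico (0:ℝ) T ⊆ Set.Ici 0)
      simpa [Function.comp_def] using h2
    · have hmem : t + (c : ℝ) * T ∈ Set.Ioo ((c : ℝ) * T) (((c : ℝ) + 1) * T) := by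
        constructor
        · linarith
        · nlinarith [ht.2]
      have := (hc.1 _ hmem).scomp_of_eq (x := t) ((hasDerivAt_id t).add_const ((c : ℝ) * T)) rfl
      simpa [Function.comp_def] using this.hasDerivWithinAt
  have hx1 : ∀ t ∈ Set.Ico (0:ℝ) T, ∀ c : Fin N,
      HasDerivWithinAt (fun τ => x (τ + (c : ℝ) * T))
        (A.mulVec (x (t + (c : ℝ) * T)) + B.mulVec (u (t + (c : ℝ) * T)))
        (Set.Ico (0:ℝ) T) t := by
    intro t ht c
    have hshift : HasDerivWithinAt (fun τ : ℝ => τ + (c : ℝ) * T) 1 (Set.Ico (0:ℝ) T) t :=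
      ((hasDerivAt_id t).add_const _).hasDerivWithinAt
    have hmaps : Set.MapsTo (fun τ : ℝ => τ + (c : ℝ) * T) (Set.Ico (0:ℝ) T)
        (Set.Icc (0:ℝ) ((N : ℝ) * T)) := fun τ hτ => hs1 τ hτ c
    have := (hx _ (hs1 t ht c)).scomp_of_eq t hshift hmaps rfl
    simpa [Function.comp_def] using this
  have hub1 : ∀ j : ℕ, j ≤ M → ∀ t ∈ Set.Ico (Tp j) (Tp (j+1)),
      HasDerivWithinAt ub (dub t) (Set.Ico (Tp j) (Tp (j+1))) t := by
    intro j hj t ht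
    rcases eq_or_lt_of_le ht.1 with h0 | h0
    · subst h0
      exact (hub j hj).2.1.mono Set.Ico_subset_Ici_self
    · exact ((hub j hj).1 t ⟨h0, ht.2⟩).hasDerivWithinAt
  have hdu_cont : ∀ c : Fin N, ContinuousOn (fun τ => du (τ + (c : ℝ) * T))
      (Set.Ico (0:ℝ) T) := by
    intro c
    have hmaps : Set.MapsTo (fun τ : ℝ => τ + (c : ℝ) * T) (Set.Ico (0:ℝ) T)
        (Set.Ico ((c : ℝ) * T) (((c : ℝ) + 1) * T)) := by
      intro τ hτ
      have h1 : (0:ℝ) ≤ τ := hτ.1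
      have h2 : τ < T := hτ.2
      constructor
      · show (c : ℝ) * T ≤ τ + (c : ℝ) * T
        linarith
      · show τ + (c : ℝ) * T < ((c : ℝ) + 1) * T
        nlinarith
    exact ContinuousOn.comp (hud c c.isLt).2.2
      ((continuous_id.add continuous_const).continuousOn) hmaps
  have H1y_eq : ∀ t ∈ Set.Ico (0:ℝ) T, H1 N T y t = C * H1 N T x t + D * H1 N T u t :=
    fun t ht => H1_comb C D (fun c => hy _ (hs1 t ht c))
  have H1xd_eq : ∀ (t : ℝ),
      H1 N T (fun s => A.mulVec (x s) + B.mulVec (u s)) t = A * H1 N T x t + B * H1 N T u t :=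
    fun t => H1_comb A B (fun c => rfl)
  constructor
  · rintro ⟨xb, hxb0, hxbc, hxbd, hxby⟩
    have hF : Continuous (fun q : (Fin n → ℝ) × (Fin m → ℝ) => A.mulVec q.1 + B.mulVec q.2) :=
      (continuous_const.matrix_mulVec continuous_fst).add
        (continuous_const.matrix_mulVec continuous_snd)
    set xd : ℝ → Fin n → ℝ := fun s => A.mulVec (x s) + B.mulVec (u s) with hxddef
    set g : ℝ → (Fin m ⊕ Fin n) → Fin N → ℝ :=
      fun t => Sum.elim (fun a c => u (t + (c : ℝ) * T) a) (fun a c => x (t + (c : ℝ) * T) a)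
      with hgdef
    set g' : ℝ → (Fin m ⊕ Fin n) → Fin N → ℝ :=
      fun t => Sum.elim (fun a c => du (t + (c : ℝ) * T) a) (fun a c => xd (t + (c : ℝ) * T) a)
      with hg'def
    set w : ℝ → (Fin m ⊕ Fin n) → ℝ := fun t => Sum.elim (ub t) (xb t) with hwdef
    set w' : ℝ → (Fin m ⊕ Fin n) → ℝ :=
      fun t => Sum.elim (dub t) (A.mulVec (xb t) + B.mulVec (ub t)) with hw'def
    set α : ℝ → Fin N → ℝ := fun t => Phi (g t, w t) with hαdef
    set αd : ℝ → Fin N → ℝ := fun t => fderiv ℝ Phi (g t, w t) (g' t, w' t) with hαddef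
    have hofg : ∀ t : ℝ, Matrix.of (g t) = Matrix.fromRows (H1 N T u t) (H1 N T x t) :=
      fun t => rfl
    have hunit : ∀ t ∈ Set.Ico (0:ℝ) T, IsUnit (Matrix.of (g t) * (Matrix.of (g t))ᵀ) := by
      intro t ht
      apply isUnit_of_rank_eq_card_s14
      rw [Matrix.rank_self_mul_transpose, hofg t, hpe t ht]
      simp
    have hdet : ∀ t ∈ Set.Ico (0:ℝ) T, (Matrix.of (Mprod (g t))).det ≠ 0 := by
      intro t ht
      rw [of_Mprod_eq]
      exact ((Matrix.isUnit_iff_isUnit_det _).1 (hunit t ht)).ne_zero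
    have hGα : ∀ t ∈ Set.Ico (0:ℝ) T, (Matrix.of (g t)).mulVec (α t) = w t :=
      fun t ht => mulVec_Phi (hunit t ht)
    have hGu : ∀ t ∈ Set.Ico (0:ℝ) T, (H1 N T u t).mulVec (α t) = ub t := by
      intro t ht
      have h := hGα t ht
      rw [hofg, Matrix.fromRows_mulVec] at h
      exact funext fun a => congrFun h (Sum.inl a)
    have hGx : ∀ t ∈ Set.Ico (0:ℝ) T, (H1 N T x t).mulVec (α t) = xb t := by
      intro t ht
      have h := hGα t ht
      rw [hofg, Matrix.fromRows_mulVec] at h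
      exact funext fun a => congrFun h (Sum.inr a)
    have hg'piece : ∀ j : ℕ, j ≤ M → ∀ t ∈ Set.Ico (Tp j) (Tp (j+1)),
        HasDerivWithinAt g (g' t) (Set.Ico (Tp j) (Tp (j+1))) t := by
      intro j hj t ht
      refine hasDerivWithinAt_pi.2 fun r => hasDerivWithinAt_pi.2 fun c => ?_
      cases r with
      | inl a =>
        exact (hasDerivWithinAt_pi.1 ((hu1 t (hpiece j hj ht) c).mono (hpiece j hj))) a
      | inr a =>
        exact (hasDerivWithinAt_pi.1 ((hx1 t (hpiece j hj ht) c).mono (hpiece j hj))) a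
    have hxbpiece : ∀ j : ℕ, j ≤ M → ∀ t ∈ Set.Ico (Tp j) (Tp (j+1)),
        HasDerivWithinAt xb (A.mulVec (xb t) + B.mulVec (ub t))
          (Set.Ico (Tp j) (Tp (j+1))) t := by
      intro j hj t ht
      rcases eq_or_lt_of_le ht.1 with h0 | h0
      · subst h0
        have hIoo : Set.Ioo (Tp j) (Tp (j+1)) ∈ 𝓝[>] (Tp j) :=
          Ioo_mem_nhdsGT_of_mem ⟨le_rfl, hTpmono j hj⟩
        have hsub : Set.Ioo (Tp j) (Tp (j+1)) ⊆ Set.Ico (0:ℝ) T :=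
          Set.Subset.trans Set.Ioo_subset_Ico_self (hpiece j hj)
        have hxbt : Filter.Tendsto xb (𝓝[>] (Tp j)) (𝓝 (xb (Tp j))) := by
          have h1 : ContinuousWithinAt xb (Set.Ioo (Tp j) (Tp (j+1))) (Tp j) :=
            (hxbc _ (hpiece j hj ht)).mono hsub
          rw [ContinuousWithinAt, nhdsWithin_Ioo_eq_nhdsGT (hTpmono j hj)] at h1
          exact h1
        have hubt : Filter.Tendsto ub (𝓝[>] (Tp j)) (𝓝 (ub (Tp j))) := by
          have h1 : ContinuousWithinAt ub (Set.Ioo (Tp j) (Tp (j+1))) (Tp j) :=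
            (hub j hj).2.1.continuousWithinAt.mono
              (Set.Subset.trans Set.Ioo_subset_Ico_self Set.Ico_subset_Ici_self)
          rw [ContinuousWithinAt, nhdsWithin_Ioo_eq_nhdsGT (hTpmono j hj)] at h1
          exact h1
        refine HasDerivWithinAt.mono ?_ Set.Ico_subset_Ici_self
        apply hasDerivWithinAt_Ici_of_tendsto_deriv
          (f_diff := fun s hs => ((hxbd j hj s hs).differentiableAt).differentiableWithinAt)
          (f_lim := (hxbc _ (hpiece j hj ht)).mono hsub)
          (hs := hIoo)
        have hev : (fun s => deriv xb s) =ᶠ[𝓝[>] (Tp j)]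
            (fun s => A.mulVec (xb s) + B.mulVec (ub s)) := by
          filter_upwards [hIoo] with s hs
          exact (hxbd j hj s hs).deriv
        rw [Filter.tendsto_congr' hev]
        exact hF.continuousAt.tendsto.comp (hxbt.prodMk_nhds hubt)
      · exact ((hxbd j hj t ⟨h0, ht.2⟩)).hasDerivWithinAt
    have hwpiece : ∀ j : ℕ, j ≤ M → ∀ t ∈ Set.Ico (Tp j) (Tp (j+1)),
        HasDerivWithinAt w (w' t) (Set.Ico (Tp j) (Tp (j+1))) t := by
      intro j hj t ht
      refine hasDerivWithinAt_pi.2 fun r => ?_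
      cases r with
      | inl a => exact (hasDerivWithinAt_pi.1 (hub1 j hj t ht)) a
      | inr a => exact (hasDerivWithinAt_pi.1 (hxbpiece j hj t ht)) a
    have hαpiece : ∀ j : ℕ, j ≤ M → ∀ t ∈ Set.Ico (Tp j) (Tp (j+1)),
        HasDerivWithinAt α (αd t) (Set.Ico (Tp j) (Tp (j+1))) t := by
      intro j hj t ht
      exact hasDerivWithinAt_Phi_comp (hg'piece j hj t ht) (hwpiece j hj t ht)
        (hdet t (hpiece j hj ht))
    have hαdcont : ∀ j : ℕ, j ≤ M → ContinuousOn αd (Set.Ico (Tp j) (Tp (j+1))) := by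
      intro j hj t ht
      refine continuousWithinAt_Phi_deriv
        (hg'piece j hj t ht).continuousWithinAt (hwpiece j hj t ht).continuousWithinAt
        ?_ ?_ (hdet t (hpiece j hj ht))
      · refine continuousWithinAt_pi.2 fun r => continuousWithinAt_pi.2 fun c => ?_
        cases r with
        | inl a =>
          exact (continuousWithinAt_pi.1
            ((hdu_cont c t (hpiece j hj ht)).mono (hpiece j hj))) a
        | inr a =>
          have hxc : ContinuousWithinAt (fun τ => x (τ + (c : ℝ) * T))
              (Set.Ico (Tp j) (Tp (j+1))) t :=
            ((hx1 t (hpiece j hj ht) c).mono (hpiece j hj)).continuousWithinAt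
          have huc : ContinuousWithinAt (fun τ => u (τ + (c : ℝ) * T))
              (Set.Ico (Tp j) (Tp (j+1))) t :=
            ((hu1 t (hpiece j hj ht) c).mono (hpiece j hj)).continuousWithinAt
          exact (continuousWithinAt_pi.1
            (hF.continuousAt.comp_continuousWithinAt (hxc.prodMk huc))) a
      · refine continuousWithinAt_pi.2 fun r => ?_
        cases r with
        | inl a =>
          exact (continuousWithinAt_pi.1 ((hub j hj).2.2 t ht)) a
        | inr a =>
          have hxc : ContinuousWithinAt xb (Set.Ico (Tp j) (Tp (j+1))) t :=
            (hxbc t (hpiece j hj ht)).mono (hpiece j hj)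
          have huc : ContinuousWithinAt ub (Set.Ico (Tp j) (Tp (j+1))) t :=
            (hub1 j hj t ht).continuousWithinAt
          exact (continuousWithinAt_pi.1
            (hF.continuousAt.comp_continuousWithinAt (hxc.prodMk huc))) a
    have huniq : ∀ j : ℕ, j ≤ M → ∀ t ∈ Set.Ico (Tp j) (Tp (j+1)),
        (H1 N T du t).mulVec (α t) + (H1 N T u t).mulVec (αd t) = dub t := by
      intro j hj t ht
      have D1 := hasDerivWithinAt_H1_mulVec
        (fun c => (hu1 t (hpiece j hj ht) c).mono (hpiece j hj)) (hαpiece j hj t ht)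
      have D2 : HasDerivWithinAt (fun τ => (H1 N T u τ).mulVec (α τ)) (dub t)
          (Set.Ico (Tp j) (Tp (j+1))) t :=
        (hub1 j hj t ht).congr (fun s hs => hGu s (hpiece j hj hs)) (hGu t (hpiece j hj ht))
      have h1 := D1.derivWithin ((uniqueDiffOn_Ico (Tp j) (Tp (j+1))) t ht)
      have h2 := D2.derivWithin ((uniqueDiffOn_Ico (Tp j) (Tp (j+1))) t ht)
      rw [← h1]
      exact h2
    have hxuniq : ∀ j : ℕ, j ≤ M → ∀ t ∈ Set.Ico (Tp j) (Tp (j+1)),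
        (H1 N T xd t).mulVec (α t) + (H1 N T x t).mulVec (αd t)
          = A.mulVec (xb t) + B.mulVec (ub t) := by
      intro j hj t ht
      have hz : ∀ c : Fin N, HasDerivWithinAt (fun τ => x (τ + (c : ℝ) * T))
          (xd (t + (c : ℝ) * T)) (Set.Ico (Tp j) (Tp (j+1))) t :=
        fun c => (hx1 t (hpiece j hj ht) c).mono (hpiece j hj)
      have D1 := hasDerivWithinAt_H1_mulVec hz (hαpiece j hj t ht)
      have D2 : HasDerivWithinAt (fun τ => (H1 N T x τ).mulVec (α τ))
          (A.mulVec (xb t) + B.mulVec (ub t)) (Set.Ico (Tp j) (Tp (j+1))) t :=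
        (hxbpiece j hj t ht).congr (fun s hs => hGx s (hpiece j hj hs)) (hGx t (hpiece j hj ht))
      have h1 := D1.derivWithin ((uniqueDiffOn_Ico (Tp j) (Tp (j+1))) t ht)
      have h2 := D2.derivWithin ((uniqueDiffOn_Ico (Tp j) (Tp (j+1))) t ht)
      rw [← h1]
      exact h2
    refine ⟨α, αd, fun j hj => ⟨fun t ht => hαpiece j hj t ht, hαdcont j hj⟩, ?_, ?_, ?_, ?_⟩
    · intro j hj t ht
      refine ⟨?_, ?_, hGu t (hpiece j hj ht), ?_⟩
      · rw [← huniq j hj t ht]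
        abel
      · have hc : (H1 N T xd t).mulVec (α t) = A.mulVec (xb t) + B.mulVec (ub t) := by
          rw [H1xd_eq t, comb_mulVec, hGx t (hpiece j hj ht), hGu t (hpiece j hj ht)]
        have h := hxuniq j hj t ht
        rw [hc] at h
        exact add_left_cancel (h.trans (add_zero _).symm)
      · rw [H1y_eq t (hpiece j hj ht), comb_mulVec, hGx t (hpiece j hj ht),
          hGu t (hpiece j hj ht), ← hxby t (hpiece j hj ht)]
    · exact hGu 0 ⟨le_rfl, hT⟩
    · rw [hGx 0 ⟨le_rfl, hT⟩, hxb0]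
    · intro j h1j hj
      have h0j : 0 < Tp j := by
        have h01 : Tp 0 < Tp 1 := hTpmono 0 (by omega)
        have h1jle := hTpmono' 1 j h1j (by omega)
        rw [hTp0] at h01
        linarith
      have hjT : Tp j < T := lt_of_lt_of_le (hTpmono j hj) (hTp_le (j+1) (by omega))
      have hmemIco : Tp j ∈ Set.Ico (0:ℝ) T := ⟨h0j.le, hjT⟩
      refine ⟨hGu (Tp j) hmemIco, ?_⟩
      have hIoomem : Set.Ioo (0:ℝ) (Tp j) ∈ 𝓝[Set.Iio (Tp j)] (Tp j) := by
        rw [← Set.Ioi_inter_Iio]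
        exact Filter.inter_mem (mem_nhdsWithin_of_mem_nhds (Ioi_mem_nhds h0j))
          self_mem_nhdsWithin
      have hsub : Set.Ioo (0:ℝ) (Tp j) ⊆ Set.Ico (0:ℝ) T := by
        intro s hs
        exact ⟨hs.1.le, lt_trans hs.2 hjT⟩
      have hxbt : Filter.Tendsto xb (𝓝[Set.Iio (Tp j)] (Tp j)) (𝓝 (xb (Tp j))) :=
        ((hxbc _ hmemIco).mono hsub).mono_of_mem_nhdsWithin hIoomem
      have hev : (fun s => (H1 N T x s).mulVec (α s)) =ᶠ[𝓝[Set.Iio (Tp j)] (Tp j)] xb := by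
        filter_upwards [hIoomem] with s hs
        exact hGx s (hsub hs)
      rw [hGx (Tp j) hmemIco]
      exact hxbt.congr' hev.symm
  · rintro ⟨α, αd, hα, heqs, hiu, hix, hjunc⟩
    have hxbpiece : ∀ j : ℕ, j ≤ M → ∀ t ∈ Set.Ico (Tp j) (Tp (j+1)),
        HasDerivWithinAt (fun τ => (H1 N T x τ).mulVec (α τ))
          ((H1 N T (fun s => A.mulVec (x s) + B.mulVec (u s)) t).mulVec (α t)
            + (H1 N T x t).mulVec (αd t)) (Set.Ico (Tp j) (Tp (j+1))) t := by
      intro j hj t ht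
      exact hasDerivWithinAt_H1_mulVec
        (fun c => (hx1 t (hpiece j hj ht) c).mono (hpiece j hj)) ((hα j hj).1 t ht)
    refine ⟨fun t => (H1 N T x t).mulVec (α t), hix, ?_, ?_, ?_⟩
    · -- continuity
      intro t ht
      obtain ⟨j, hj, htj⟩ := hcover t ht
      rcases eq_or_lt_of_le htj.1 with h0 | h0
      · subst h0
        have hpmem : Set.Ico (Tp j) (Tp (j+1)) ∈ 𝓝[Set.Ico (Tp j) T] (Tp j) := by
          refine Filter.mem_of_superset (Filter.inter_mem self_mem_nhdsWithin
            (mem_nhdsWithin_of_mem_nhds (Iio_mem_nhds (hTpmono j hj)))) ?_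
          intro s hs
          exact ⟨hs.1.1, hs.2⟩
        have hright : ContinuousWithinAt (fun τ => (H1 N T x τ).mulVec (α τ))
            (Set.Ico (Tp j) T) (Tp j) :=
          ((hxbpiece j hj _ htj).continuousWithinAt).mono_of_mem_nhdsWithin hpmem
        rcases Nat.eq_zero_or_pos j with hj0 | hj0
        · subst hj0
          rw [hTp0] at hright
          rw [hTp0]
          exact hright
        · have hleft : ContinuousWithinAt (fun τ => (H1 N T x τ).mulVec (α τ))
              (Set.Iio (Tp j)) (Tp j) := (hjunc j hj0 hj).2
          refine (hleft.union hright).mono ?_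
          intro s hs
          rcases lt_or_ge s (Tp j) with h | h
          · exact Or.inl h
          · exact Or.inr ⟨h, hs.2⟩
      · exact (((hxbpiece j hj t htj).hasDerivAt
          (Ico_mem_nhds h0 htj.2)).continuousAt).continuousWithinAt
    · -- ODE on open pieces
      intro j hj t ht
      have ht' : t ∈ Set.Ico (Tp j) (Tp (j+1)) := ⟨ht.1.le, ht.2⟩
      have hD := (hxbpiece j hj t ht').hasDerivAt (Ico_mem_nhds ht.1 ht.2)
      have he := heqs j hj t ht'
      rw [H1xd_eq t, comb_mulVec, he.2.1, add_zero, he.2.2.1] at hD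
      exact hD
    · -- output equation
      intro t ht
      obtain ⟨j, hj, htj⟩ := hcover t ht
      have he := heqs j hj t htj
      rw [← he.2.2.2, H1y_eq t ht, comb_mulVec, he.2.2.1]
end
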